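/- arXiv:2104.05468 — 9 statements merged into one kernel-verified Lean document; each statement's English description precedes it below -/
import Mathlib

section
/- If f : ℝⁿ → ℝ is differentiable and satisfies |f(y) - f(x) - ⟨∇f(x), y - x⟩| ≤ (L/2)‖y - x‖² for all x, y, then its gradient is L-Lipschitz: ‖∇f(x) - ∇f(y)‖ ≤ L‖x - y‖ for all x, y. -/
/-!
Write `g` for the gradient and let `m` be the midpoint of `x` and `y`. Testing the two-sided
bound at the points `m ± w` from both `x` and `y`, the values of `f` cancel and, by the
parallelogram law, `⟪g x - g y, w⟫ ≤ L ‖w‖² + L ‖x - y‖² / 4` for every `w`. Taking `w` along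
`g x - g y`, nonnegativity of the resulting quadratic in the step length forces
`‖g x - g y‖² ≤ L² ‖x - y‖²`.
-/

open RealInnerProductSpace

variable {E : Type*} [NormedAddCommGroup E] [InnerProductSpace ℝ E]

theorem norm_sq_le_of_forall_inner_le {d : E} {a b : ℝ} (ha : 0 ≤ a)
    (h : ∀ w, ⟪d, w⟫ ≤ a * ‖w‖ ^ 2 + b) : ‖d‖ ^ 2 ≤ 4 * a * b := by
  have hb : 0 ≤ b := by simpa using h 0
  have hquad : ∀ t : ℝ, 0 ≤ (a * ‖d‖ ^ 2) * (t * t) + (-‖d‖ ^ 2) * t + b := fun t => by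
    have ht := h (t • d)
    rw [inner_smul_right, real_inner_self_eq_norm_sq, norm_smul, Real.norm_eq_abs, mul_pow,
      sq_abs] at ht
    linarith
  have hdisc := discrim_le_zero hquad
  rw [discrim] at hdisc
  nlinarith [sq_nonneg ‖d‖, mul_nonneg ha hb]

theorem inner_sub_le_of_abs_sub_inner_le {f : E → ℝ} {g : E → E} {L : ℝ}
    (h : ∀ x y, |f y - f x - ⟪g x, y - x⟫| ≤ L / 2 * ‖y - x‖ ^ 2) (x y w : E) :
    ⟪g x - g y, w⟫ ≤ L * ‖w‖ ^ 2 + L / 4 * ‖x - y‖ ^ 2 := by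
  set e : E := (2 : ℝ)⁻¹ • (y - x) with he
  set m : E := x + e
  have upper_x := (abs_le.mp (h x (m - w))).2
  have lower_y := (abs_le.mp (h y (m - w))).1
  have lower_x := (abs_le.mp (h x (m + w))).1
  have upper_y := (abs_le.mp (h y (m + w))).2
  rw [show m - w - x = -(w - e) by module] at upper_x
  rw [show m - w - y = -(w + e) by rw [he]; module] at lower_y
  rw [show m + w - x = w + e by module] at lower_x
  rw [show m + w - y = w - e by rw [he]; module] at upper_y
  have hxy : ‖x - y‖ ^ 2 = 4 * ‖e‖ ^ 2 := by
    rw [show x - y = (-2 : ℝ) • e by rw [he]; module, norm_smul]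
    norm_num [mul_pow]
  simp only [norm_neg, inner_neg_right, inner_add_right, inner_sub_right, inner_sub_left]
    at upper_x lower_y lower_x upper_y ⊢
  have hpar : ‖w + e‖ ^ 2 + ‖w - e‖ ^ 2 = 2 * ‖w‖ ^ 2 + 2 * ‖e‖ ^ 2 := by
    rw [norm_add_sq_real, norm_sub_sq_real]; ring
  linarith [congrArg (L * ·) hpar, congrArg (L * ·) hxy]

theorem norm_sub_le_of_abs_sub_inner_le {f : E → ℝ} {g : E → E} {L : ℝ} (hL : 0 ≤ L)
    (h : ∀ x y, |f y - f x - ⟪g x, y - x⟫| ≤ L / 2 * ‖y - x‖ ^ 2) (x y : E) :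
    ‖g x - g y‖ ≤ L * ‖x - y‖ := by
  have hsq := norm_sq_le_of_forall_inner_le hL (inner_sub_le_of_abs_sub_inner_le h x y)
  refine (pow_le_pow_iff_left₀ (norm_nonneg _) (by positivity) two_ne_zero).mp ?_
  linarith [mul_pow L ‖x - y‖ 2]

theorem stmt_1_general {n : ℕ} (f : EuclideanSpace ℝ (Fin n) → ℝ) (L : ℝ) (hL : 0 ≤ L)
    (hsmooth : ∀ x y, |f y - f x - (inner ℝ (gradient f x) (y - x) : ℝ)| ≤ L / 2 * ‖y - x‖ ^ 2) :
    ∀ x y, ‖gradient f x - gradient f y‖ ≤ L * ‖x - y‖ :=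
  norm_sub_le_of_abs_sub_inner_le hL hsmooth

theorem stmt_1 {n : ℕ} (f : EuclideanSpace ℝ (Fin n) → ℝ) (L : ℝ) (hL : 0 ≤ L)
    (hf : Differentiable ℝ f)
    (hsmooth : ∀ x y, |f y - f x - (inner ℝ (gradient f x) (y - x) : ℝ)| ≤ L / 2 * ‖y - x‖ ^ 2) :
    ∀ x y, ‖gradient f x - gradient f y‖ ≤ L * ‖x - y‖ :=
  stmt_1_general f L hL hsmooth
end

section
/- Let f : ℝⁿ → ℝ be L-smooth with L-Lipschitz gradient. Then for all x, y: (1/(2L))‖∇f(x) - ∇f(y)‖² - (L/4)‖x - y - (1/L)(∇f(x) - ∇f(y))‖² ≤ f(x) - f(y) - ⟨∇f(y), x - y⟩. -/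
/-!
The two-sided descent lemma `|f b - f a - ⟪∇f a, b - a⟫| ≤ L/2 ‖b - a‖²`, used as an upper bound
from `x` and as a lower bound from `y` at the same point `z = x - u`, bounds
`f x - f y - ⟪∇f y, x - y⟫` from below by a concave quadratic in `u`. Its maximum, attained at
`u = (x - y)/2 + (∇f x - ∇f y)/(2L)`, is the left-hand side of the interpolation inequality.
-/

open Set
open scoped RealInnerProductSpace

section Smooth

variable {E : Type*} [NormedAddCommGroup E] [InnerProductSpace ℝ E] [CompleteSpace E]
  {f : E → ℝ} {L : ℝ}

theorem DifferentiableAt.hasDerivAt_comp_add_smul {a v : E} {t : ℝ}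
    (hf : DifferentiableAt ℝ f (a + t • v)) :
    HasDerivAt (fun s : ℝ => f (a + s • v)) ⟪gradient f (a + t • v), v⟫ t := by
  have hline : HasDerivAt (fun s : ℝ => a + s • v) v t := by
    simpa using ((hasDerivAt_id t).smul_const v).const_add a
  have hcomp := hf.hasFDerivAt.comp_hasDerivAt t hline
  rwa [hf.hasGradientAt.fderiv_apply] at hcomp

theorem abs_sub_sub_inner_gradient_le (hf : Differentiable ℝ f)
    (hlip : ∀ x y, ‖gradient f x - gradient f y‖ ≤ L * ‖x - y‖) (a b : E) :
    |f b - f a - ⟪gradient f a, b - a⟫| ≤ L / 2 * ‖b - a‖ ^ 2 := by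
  set v := b - a
  let g : ℝ → ℝ := fun t => f (a + t • v) - f a - t * ⟪gradient f a, v⟫
  have hg : ∀ t, HasDerivAt g ⟪gradient f (a + t • v) - gradient f a, v⟫ t := by
    intro t
    rw [inner_sub_left]
    exact ((((hf (a + t • v)).hasDerivAt_comp_add_smul).sub_const (f a)).sub
      ((hasDerivAt_id t).mul_const ⟪gradient f a, v⟫)).congr_deriv (by simp)
  have hg_bound : ∀ t ∈ Ico (0 : ℝ) 1,
      ‖⟪gradient f (a + t • v) - gradient f a, v⟫‖ ≤ L * ‖v‖ ^ 2 * t := by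
    intro t ht
    calc _ ≤ ‖gradient f (a + t • v) - gradient f a‖ * ‖v‖ := norm_inner_le_norm _ _
      _ ≤ L * ‖t • v‖ * ‖v‖ := by gcongr; simpa using hlip (a + t • v) a
      _ = L * ‖v‖ ^ 2 * t := by rw [norm_smul, Real.norm_of_nonneg ht.1]; ring
  have hB : ∀ t : ℝ, HasDerivAt (fun t => L / 2 * ‖v‖ ^ 2 * t ^ 2) (L * ‖v‖ ^ 2 * t) t :=
    fun t => ((hasDerivAt_pow 2 t).const_mul _).congr_deriv (by push_cast; ring)
  have := image_norm_le_of_norm_deriv_right_le_deriv_boundary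
    (fun t _ => (hg t).continuousAt.continuousWithinAt) (fun t _ => (hg t).hasDerivWithinAt)
    (by simp [g]) hB hg_bound (right_mem_Icc.2 zero_le_one)
  simpa [g, v] using this

theorem le_sub_sub_inner_gradient (hf : Differentiable ℝ f)
    (hlip : ∀ x y, ‖gradient f x - gradient f y‖ ≤ L * ‖x - y‖) (x y u : E) :
    ⟪gradient f x - gradient f y, u⟫ - L / 2 * (‖u‖ ^ 2 + ‖x - y - u‖ ^ 2) ≤
      f x - f y - ⟪gradient f y, x - y⟫ := by
  have hx := (abs_le.1 (abs_sub_sub_inner_gradient_le hf hlip x (x - u))).2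
  have hy := (abs_le.1 (abs_sub_sub_inner_gradient_le hf hlip y (x - u))).1
  rw [sub_sub_cancel_left, norm_neg, inner_neg_right] at hx
  rw [sub_right_comm, inner_sub_right] at hy
  rw [inner_sub_left]
  linarith

end Smooth

theorem inner_sub_norm_sq_add_norm_sq_eq {F : Type*} [NormedAddCommGroup F]
    [InnerProductSpace ℝ F] (d g : F) {L : ℝ} (hL : L ≠ 0) :
    ⟪g, (1 / 2 : ℝ) • d + (1 / (2 * L)) • g⟫
        - L / 2 * (‖(1 / 2 : ℝ) • d + (1 / (2 * L)) • g‖ ^ 2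
          + ‖d - ((1 / 2 : ℝ) • d + (1 / (2 * L)) • g)‖ ^ 2) =
      1 / (2 * L) * ‖g‖ ^ 2 - L / 4 * ‖d - (1 / L) • g‖ ^ 2 := by
  have hdu : d - ((1 / 2 : ℝ) • d + (1 / (2 * L)) • g) = (1 / 2 : ℝ) • d - (1 / (2 * L)) • g := by
    module
  rw [hdu]
  simp only [norm_add_sq_real, norm_sub_sq_real, inner_add_right, real_inner_smul_left,
    real_inner_smul_right, norm_smul, mul_pow, Real.norm_eq_abs, sq_abs, real_inner_self_eq_norm_sq,
    real_inner_comm d g]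
  field_simp
  ring

theorem stmt_4 {n : ℕ} (f : EuclideanSpace ℝ (Fin n) → ℝ) (L : ℝ) (hL : 0 < L)
    (hf : Differentiable ℝ f)
    (hlip : ∀ x y, ‖gradient f x - gradient f y‖ ≤ L * ‖x - y‖) :
    ∀ x y, 1 / (2 * L) * ‖gradient f x - gradient f y‖ ^ 2
        - L / 4 * ‖x - y - (1 / L) • (gradient f x - gradient f y)‖ ^ 2 ≤
      f x - f y - (inner ℝ (gradient f y) (x - y) : ℝ) := by
  intro x y
  rw [← inner_sub_norm_sq_add_norm_sq_eq (x - y) _ hL.ne']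
  exact le_sub_sub_inner_gradient hf hlip x y _
end

section
/- Let f : ℝⁿ → ℝ be L-smooth, bounded below with lower bound f⋆, and let x¹ satisfy f(x¹) - f⋆ ≤ Δ. Define x^{k+1} = x^k - t_k ∇f(x^k) for k = 1,…,N, with t_k ∈ (0, 2/L). Then min_{1≤k≤N+1} ‖∇f(x^k)‖ ≤ ( Δ / ( Σ_{k=1}^N t_k(1 - (L t_k)/2) + 1/(2L) ) )^{1/2}. -/
/-! Each gradient step decreases `f` by at least `t_k (1 - L t_k / 2) ‖∇f(x^k)‖²` (descent lemma),
and a further virtual step of length `1 / L` from `x^{N+1}` shows that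
`f(x^{N+1}) - f⋆ ≥ ‖∇f(x^{N+1})‖² / (2L)`. Telescoping, the weighted sum of the squared gradient
norms is at most `f(x¹) - f⋆ ≤ Δ`, so the smallest of them is at most `Δ` over the total weight. -/

open Finset InnerProductSpace

section Smooth

variable {E : Type*} [NormedAddCommGroup E] [InnerProductSpace ℝ E] [CompleteSpace E]
  {f : E → ℝ} {L : ℝ}

theorem le_add_inner_gradient_add_sq_of_lipschitz_gradient (hf : Differentiable ℝ f)
    (hlip : ∀ x y, ‖gradient f x - gradient f y‖ ≤ L * ‖x - y‖) (x y : E) :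
    f y ≤ f x + ⟪gradient f x, y - x⟫_ℝ + L / 2 * ‖y - x‖ ^ 2 := by
  set v := y - x
  -- `φ s - φ 0` is `f (x + s • v)` minus its quadratic upper model; the Lipschitz gradient
  -- makes its slope nonpositive.
  set φ : ℝ → ℝ := fun s ↦ f (x + s • v) - s * ⟪gradient f x, v⟫_ℝ - L / 2 * s ^ 2 * ‖v‖ ^ 2
  have hφ : ∀ s, HasDerivAt φ
      (⟪gradient f (x + s • v), v⟫_ℝ - ⟪gradient f x, v⟫_ℝ - L * s * ‖v‖ ^ 2) s := by
    intro s
    have hline : HasDerivAt (fun s : ℝ ↦ x + s • v) v s := by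
      simpa using ((hasDerivAt_id s).smul_const v).const_add x
    have hf' := (hf (x + s • v)).hasGradientAt.hasFDerivAt.comp_hasDerivAt s hline
    rw [toDual_apply_apply] at hf'
    refine ((hf'.sub (hasDerivAt_mul_const ⟪gradient f x, v⟫_ℝ)).sub
      (((hasDerivAt_pow 2 s).const_mul (L / 2)).mul_const (‖v‖ ^ 2))).congr_deriv ?_
    push_cast
    ring
  have hanti : AntitoneOn φ (Set.Icc 0 1) := by
    refine antitoneOn_of_hasDerivWithinAt_nonpos (convex_Icc 0 1)
      (fun s _ ↦ (hφ s).continuousAt.continuousWithinAt) (fun s _ ↦ (hφ s).hasDerivWithinAt) ?_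
    intro s hs
    rw [interior_Icc] at hs
    have hslope : ⟪gradient f (x + s • v) - gradient f x, v⟫_ℝ ≤ L * s * ‖v‖ ^ 2 :=
      calc _ ≤ ‖gradient f (x + s • v) - gradient f x‖ * ‖v‖ := real_inner_le_norm _ _
        _ ≤ L * ‖x + s • v - x‖ * ‖v‖ := by gcongr; exact hlip _ _
        _ = L * s * ‖v‖ ^ 2 := by
          rw [add_sub_cancel_left, norm_smul, Real.norm_of_nonneg hs.1.le]; ring
    rw [inner_sub_left] at hslope
    linarith
  have hφ01 := hanti (by simp) (by simp) zero_le_one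
  simp only [φ, v, zero_smul, one_smul, add_zero, add_sub_cancel, zero_mul, one_mul] at hφ01
  linarith

theorem map_sub_smul_gradient_le (hf : Differentiable ℝ f)
    (hlip : ∀ x y, ‖gradient f x - gradient f y‖ ≤ L * ‖x - y‖) (x : E) (t : ℝ) :
    f (x - t • gradient f x) ≤ f x - t * (1 - L * t / 2) * ‖gradient f x‖ ^ 2 := by
  have h := le_add_inner_gradient_add_sq_of_lipschitz_gradient hf hlip x (x - t • gradient f x)
  rw [sub_sub_cancel_left, inner_neg_right, real_inner_smul_right, real_inner_self_eq_norm_sq,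
    norm_neg, norm_smul, mul_pow, Real.norm_eq_abs, sq_abs] at h
  linarith

theorem add_norm_gradient_sq_le_of_forall_le (hL : 0 < L) (hf : Differentiable ℝ f)
    (hlip : ∀ x y, ‖gradient f x - gradient f y‖ ≤ L * ‖x - y‖) {m : ℝ} (hm : ∀ y, m ≤ f y)
    (x : E) : m + 1 / (2 * L) * ‖gradient f x‖ ^ 2 ≤ f x := by
  have h := map_sub_smul_gradient_le hf hlip x (1 / L)
  have hw : 1 / L * (1 - L * (1 / L) / 2) = 1 / (2 * L) := by field_simp; ring
  rw [hw] at h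
  linarith [hm (x - (1 / L) • gradient f x)]

end Smooth

theorem add_sum_Icc_le_of_le_sub {a b : ℕ → ℝ} {N : ℕ}
    (h : ∀ k ∈ Icc 1 N, a (k + 1) ≤ a k - b k) : a (N + 1) + ∑ k ∈ Icc 1 N, b k ≤ a 1 := by
  induction N with
  | zero => simp
  | succ N ih =>
    rw [sum_Icc_succ_top (by omega)]
    have hN := h (N + 1) (by simp)
    have := ih fun k hk ↦ h k (Icc_subset_Icc_right N.le_succ hk)
    linarith

theorem exists_le_sqrt_div_of_weighted_sum_sq_le {ι : Type*} {s u : Finset ι} (hsu : s ⊆ u)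
    {j : ι} (hj : j ∈ u) {w g : ι → ℝ} {c Δ : ℝ} (hw : ∀ i ∈ s, 0 ≤ w i) (hc : 0 < c)
    (h : ∑ i ∈ s, w i * g i ^ 2 + c * g j ^ 2 ≤ Δ) :
    ∃ i ∈ u, g i ≤ √(Δ / (∑ i ∈ s, w i + c)) := by
  obtain ⟨i, hi, hmin⟩ := u.exists_min_image (fun i ↦ g i ^ 2) ⟨j, hj⟩
  refine ⟨i, hi, (le_abs_self _).trans (Real.abs_le_sqrt ?_)⟩
  rw [le_div_iff₀ (add_pos_of_nonneg_of_pos (sum_nonneg hw) hc)]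
  calc g i ^ 2 * (∑ k ∈ s, w k + c) = ∑ k ∈ s, w k * g i ^ 2 + c * g i ^ 2 := by
        rw [mul_comm, add_mul, sum_mul]
    _ ≤ ∑ k ∈ s, w k * g k ^ 2 + c * g j ^ 2 :=
        add_le_add (sum_le_sum fun k hk ↦ mul_le_mul_of_nonneg_left (hmin k (hsu hk)) (hw k hk))
          (mul_le_mul_of_nonneg_left (hmin j hj) hc.le)
    _ ≤ Δ := h

theorem stmt_5_general {n : ℕ} (f : EuclideanSpace ℝ (Fin n) → ℝ) (L : ℝ) (hL : 0 < L)
    (hf : Differentiable ℝ f)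
    (hlip : ∀ x y, ‖gradient f x - gradient f y‖ ≤ L * ‖x - y‖)
    (fstar : ℝ) (hlow : ∀ y, fstar ≤ f y)
    (Δ : ℝ) (N : ℕ)
    (t : ℕ → ℝ) (ht : ∀ k, 1 ≤ k → k ≤ N → t k ∈ Set.Ioo 0 (2 / L))
    (x : ℕ → EuclideanSpace ℝ (Fin n))
    (hinit : f (x 1) - fstar ≤ Δ)
    (hupd : ∀ k, 1 ≤ k → k ≤ N → x (k + 1) = x k - t k • gradient f (x k)) :
    ∃ k ∈ Finset.Icc 1 (N + 1),
      ‖gradient f (x k)‖ ≤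
        Real.sqrt (Δ / (∑ k ∈ Finset.Icc 1 N, t k * (1 - L * t k / 2) + 1 / (2 * L))) := by
  have hdescent : ∀ k ∈ Icc 1 N, f (x (k + 1)) ≤
      f (x k) - t k * (1 - L * t k / 2) * ‖gradient f (x k)‖ ^ 2 := by
    intro k hk
    obtain ⟨hk1, hkN⟩ := mem_Icc.1 hk
    rw [hupd k hk1 hkN]
    exact map_sub_smul_gradient_le hf hlip _ _
  have hweight : ∀ k ∈ Icc 1 N, 0 ≤ t k * (1 - L * t k / 2) := by
    intro k hk
    obtain ⟨htk, htkL⟩ := ht k (mem_Icc.1 hk).1 (mem_Icc.1 hk).2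
    have := (lt_div_iff₀ hL).1 htkL
    exact mul_nonneg htk.le (by linarith)
  have htel := add_sum_Icc_le_of_le_sub (a := fun k ↦ f (x k))
    (b := fun k ↦ t k * (1 - L * t k / 2) * ‖gradient f (x k)‖ ^ 2) hdescent
  have hlast := add_norm_gradient_sq_le_of_forall_le hL hf hlip hlow (x (N + 1))
  refine exists_le_sqrt_div_of_weighted_sum_sq_le (Icc_subset_Icc_right N.le_succ)
    (right_mem_Icc.2 (by omega)) hweight (by positivity) ?_
  linarith

theorem stmt_5 {n : ℕ} (f : EuclideanSpace ℝ (Fin n) → ℝ) (L : ℝ) (hL : 0 < L)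
    (hf : Differentiable ℝ f)
    (hlip : ∀ x y, ‖gradient f x - gradient f y‖ ≤ L * ‖x - y‖)
    (fstar : ℝ) (hlow : ∀ y, fstar ≤ f y)
    (Δ : ℝ) (hΔ : 0 < Δ) (N : ℕ)
    (t : ℕ → ℝ) (ht : ∀ k, 1 ≤ k → k ≤ N → t k ∈ Set.Ioo 0 (2 / L))
    (x : ℕ → EuclideanSpace ℝ (Fin n))
    (hinit : f (x 1) - fstar ≤ Δ)
    (hupd : ∀ k, 1 ≤ k → k ≤ N → x (k + 1) = x k - t k • gradient f (x k)) :
    ∃ k ∈ Finset.Icc 1 (N + 1),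
      ‖gradient f (x k)‖ ≤
        Real.sqrt (Δ / (∑ k ∈ Finset.Icc 1 N, t k * (1 - L * t k / 2) + 1 / (2 * L))) :=
  stmt_5_general f L hL hf hlip fstar hlow Δ N t ht x hinit hupd
end

section
/- Let f : ℝⁿ → ℝ be L-smooth, bounded below with lower bound f⋆, and let x^{k+1} = x^k - (1/L)∇f(x^k) for k = 1,…,N with f(x¹) - f⋆ ≤ Δ. Then min_{1≤k≤N+1} ‖∇f(x^k)‖ ≤ (2LΔ/(N+1))^{1/2}. -/
/-!
A gradient step of length `1/L` lowers `f` by at least `‖∇f‖² / (2L)` (descent lemma). Summing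
this over the `N` iterations and over one further, virtual step from `x (N + 1)`, whose image
still lies above `f⋆`, bounds the sum of the `N + 1` squared gradient norms by
`2L (f (x 1) - f⋆) ≤ 2LΔ`; the smallest of them is then at most the average `2LΔ / (N + 1)`.
-/

open Finset
open scoped Gradient RealInnerProductSpace

theorem Finset.sum_Icc_le_sub_of_le_sub {α : Type*} [AddCommGroup α] [PartialOrder α]
    [IsOrderedAddMonoid α] {u d : ℕ → α} {N : ℕ} (h : ∀ k ∈ Icc 1 N, d k ≤ u k - u (k + 1)) :
    ∑ k ∈ Icc 1 N, d k ≤ u 1 - u (N + 1) :=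
  calc ∑ k ∈ Icc 1 N, d k ≤ ∑ k ∈ Icc 1 N, (u k - u (k + 1)) := sum_le_sum h
    _ = u 1 - u (N + 1) := by
      rw [← Ico_add_one_right_eq_Icc, ← neg_sub, ← sum_Ico_sub u (by omega), ← sum_neg_distrib]
      simp only [neg_sub]

theorem Finset.exists_le_sqrt_of_sum_sq_le {ι : Type*} {s : Finset ι} (hs : s.Nonempty)
    {a : ι → ℝ} {C : ℝ} (h : ∑ i ∈ s, a i ^ 2 ≤ C) : ∃ i ∈ s, a i ≤ √(C / #s) := by
  obtain ⟨i, hi, hle⟩ := exists_le_of_sum_le hs (f := fun i ↦ a i ^ 2) (g := fun _ ↦ C / #s) <| by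
    rwa [sum_const, nsmul_eq_mul, mul_div_cancel₀ _ (by simpa using hs.ne_empty)]
  exact ⟨i, hi, (le_abs_self _).trans (Real.abs_le_sqrt hle)⟩

section GradientDescent

variable {E : Type*} [NormedAddCommGroup E] [InnerProductSpace ℝ E] [CompleteSpace E]
  {f : E → ℝ} {L : ℝ}

theorem image_add_le_add_inner_gradient_add_sq (hf : Differentiable ℝ f)
    (hlip : ∀ x y, ‖∇ f x - ∇ f y‖ ≤ L * ‖x - y‖) (x v : E) :
    f (x + v) ≤ f x + ⟪∇ f x, v⟫ + L / 2 * ‖v‖ ^ 2 := by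
  set c := ⟪∇ f x, v⟫
  set φ : ℝ → ℝ := fun t ↦ f (x + t • v) - t * c - L / 2 * t ^ 2 * ‖v‖ ^ 2
  have hφ : ∀ t, HasDerivAt φ (⟪∇ f (x + t • v) - ∇ f x, v⟫ - L * t * ‖v‖ ^ 2) t := by
    intro t
    have hline : HasDerivAt (fun t : ℝ ↦ x + t • v) v t := by
      simpa using ((hasDerivAt_id t).smul_const v).const_add x
    have hf_line := (hf (x + t • v)).hasFDerivAt.comp_hasDerivAt t hline
    rw [← inner_gradient_left] at hf_line
    refine ((hf_line.sub ((hasDerivAt_id t).mul_const c)).sub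
      (((hasDerivAt_pow 2 t).const_mul (L / 2)).mul_const (‖v‖ ^ 2))).congr_deriv ?_
    rw [inner_sub_left]
    simp only [one_mul, Nat.cast_ofNat, Nat.add_one_sub_one, pow_one]
    ring
  have hanti : AntitoneOn φ (Set.Ici 0) := by
    refine antitoneOn_of_hasDerivWithinAt_nonpos (convex_Ici 0)
      (fun t _ ↦ (hφ t).continuousAt.continuousWithinAt) (fun t _ ↦ (hφ t).hasDerivWithinAt) ?_
    intro t ht
    rw [interior_Ici, Set.mem_Ioi] at ht
    calc ⟪∇ f (x + t • v) - ∇ f x, v⟫ - L * t * ‖v‖ ^ 2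
        ≤ L * ‖x + t • v - x‖ * ‖v‖ - L * t * ‖v‖ ^ 2 := by
          gcongr
          exact (real_inner_le_norm _ _).trans (by gcongr; exact hlip _ _)
      _ = 0 := by
          rw [add_sub_cancel_left, norm_smul, Real.norm_of_nonneg ht.le]
          ring
  have := hanti Set.self_mem_Ici (zero_le_one' ℝ) (zero_le_one' ℝ)
  simp only [φ, one_smul, zero_smul, add_zero] at this
  linarith

theorem image_sub_one_div_smul_gradient_le (hf : Differentiable ℝ f)
    (hlip : ∀ x y, ‖∇ f x - ∇ f y‖ ≤ L * ‖x - y‖) (x : E) :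
    f (x - (1 / L) • ∇ f x) ≤ f x - ‖∇ f x‖ ^ 2 / (2 * L) := by
  have h := image_add_le_add_inner_gradient_add_sq hf hlip x (-((1 / L) • ∇ f x))
  rw [← sub_eq_add_neg, inner_neg_right, real_inner_smul_right, real_inner_self_eq_norm_sq,
    norm_neg, norm_smul, Real.norm_eq_abs, mul_pow, sq_abs] at h
  convert h using 1
  -- for `L = 0` both sides are `f x`, as `1 / 0 = 0`
  rcases eq_or_ne L 0 with rfl | hL
  · simp
  · field_simp
    ring

theorem sum_sq_norm_gradient_div_le_of_gradient_descent (hf : Differentiable ℝ f)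
    (hlip : ∀ x y, ‖∇ f x - ∇ f y‖ ≤ L * ‖x - y‖) {fstar : ℝ} (hlow : ∀ y, fstar ≤ f y)
    {N : ℕ} {x : ℕ → E}
    (hupd : ∀ k, 1 ≤ k → k ≤ N → x (k + 1) = x k - (1 / L) • ∇ f (x k)) :
    ∑ k ∈ Icc 1 (N + 1), ‖∇ f (x k)‖ ^ 2 / (2 * L) ≤ f (x 1) - fstar := by
  have hstep : ∀ y, ‖∇ f y‖ ^ 2 / (2 * L) ≤ f y - f (y - (1 / L) • ∇ f y) := fun y ↦ by
    linarith [image_sub_one_div_smul_gradient_le hf hlip y]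
  have htelescope : ∑ k ∈ Icc 1 N, ‖∇ f (x k)‖ ^ 2 / (2 * L) ≤ f (x 1) - f (x (N + 1)) :=
    sum_Icc_le_sub_of_le_sub (u := fun k ↦ f (x k)) fun k hk ↦ by
      rw [mem_Icc] at hk
      simpa only [hupd k hk.1 hk.2] using hstep (x k)
  rw [sum_Icc_succ_top (by omega)]
  linarith [hstep (x (N + 1)), hlow (x (N + 1) - (1 / L) • ∇ f (x (N + 1)))]

end GradientDescent

theorem stmt_6_general {n : ℕ} (f : EuclideanSpace ℝ (Fin n) → ℝ) (L : ℝ) (hL : 0 < L)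
    (hf : Differentiable ℝ f)
    (hlip : ∀ x y, ‖gradient f x - gradient f y‖ ≤ L * ‖x - y‖)
    (fstar : ℝ) (hlow : ∀ y, fstar ≤ f y)
    (Δ : ℝ) (N : ℕ)
    (x : ℕ → EuclideanSpace ℝ (Fin n))
    (hinit : f (x 1) - fstar ≤ Δ)
    (hupd : ∀ k, 1 ≤ k → k ≤ N → x (k + 1) = x k - (1 / L) • gradient f (x k)) :
    ∃ k ∈ Finset.Icc 1 (N + 1),
      ‖gradient f (x k)‖ ≤ Real.sqrt (2 * L * Δ / (N + 1)) := by
  have hsum : ∑ k ∈ Icc 1 (N + 1), ‖∇ f (x k)‖ ^ 2 ≤ 2 * L * Δ := by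
    have h := (sum_sq_norm_gradient_div_le_of_gradient_descent hf hlip hlow hupd).trans hinit
    rwa [← sum_div, div_le_iff₀ (by positivity), mul_comm] at h
  obtain ⟨k, hk, hle⟩ := exists_le_sqrt_of_sum_sq_le (nonempty_Icc.2 (by omega)) hsum
  refine ⟨k, hk, hle.trans_eq ?_⟩
  simp

theorem stmt_6 {n : ℕ} (f : EuclideanSpace ℝ (Fin n) → ℝ) (L : ℝ) (hL : 0 < L)
    (hf : Differentiable ℝ f)
    (hlip : ∀ x y, ‖gradient f x - gradient f y‖ ≤ L * ‖x - y‖)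
    (fstar : ℝ) (hlow : ∀ y, fstar ≤ f y)
    (Δ : ℝ) (hΔ : 0 < Δ) (N : ℕ) (hN : 1 ≤ N)
    (x : ℕ → EuclideanSpace ℝ (Fin n))
    (hinit : f (x 1) - fstar ≤ Δ)
    (hupd : ∀ k, 1 ≤ k → k ≤ N → x (k + 1) = x k - (1 / L) • gradient f (x k)) :
    ∃ k ∈ Finset.Icc 1 (N + 1),
      ‖gradient f (x k)‖ ≤ Real.sqrt (2 * L * Δ / (N + 1)) :=
  stmt_6_general f L hL hf hlip fstar hlow Δ N x hinit hupd
end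

section
/- For L > 0, the function h(s) = min(-L²s³ + 4s, -Ls² + 4s) is strictly concave on the interval (0, √3/L), and its unique maximizer on this interval is s = √(4/3)/L. -/
/-!
Both branches have the form `-c * s ^ n + 4 * s` with `c > 0`, `n ≥ 2`, hence are strictly
concave on `[0, ∞)`, and so is their minimum. At `t = √(4/3) / L` we have `L * t ≥ 1`, so `h t`
is the cubic branch, and `t` is the critical point of that cubic: for `s ≥ 0`,
`cubic t - cubic s = L² (s - t)² (s + 2t)`, whence `h s ≤ cubic s < cubic t = h t` for `s ≠ t`.
-/

open Set

theorem StrictConvexOn.const_mul {𝕜 E : Type*} [Field 𝕜] [LinearOrder 𝕜] [IsStrictOrderedRing 𝕜]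
    [AddCommMonoid E] [Module 𝕜 E] {s : Set E} {f : E → 𝕜} {c : 𝕜} (hc : 0 < c)
    (hf : StrictConvexOn 𝕜 s f) : StrictConvexOn 𝕜 s fun x => c * f x := by
  refine ⟨hf.1, fun x hx y hy hxy a b ha hb hab => ?_⟩
  calc c * f (a • x + b • y) < c * (a • f x + b • f y) :=
        mul_lt_mul_of_pos_left (hf.2 hx hy hxy ha hb hab) hc
    _ = a • (c * f x) + b • (c * f y) := by simp only [smul_eq_mul]; ring

theorem strictConcaveOn_neg_mul_pow_add_mul {c : ℝ} (hc : 0 < c) {n : ℕ} (hn : 2 ≤ n) (k : ℝ) :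
    StrictConcaveOn ℝ (Ici 0) fun x : ℝ => -c * x ^ n + k * x := by
  have hfun : (fun x : ℝ => -c * x ^ n + k * x) =
      (-fun x => c * x ^ n) + LinearMap.mulLeft ℝ k := by
    ext x; simp
  rw [hfun]
  exact ((strictConvexOn_pow hn).const_mul hc).neg.add_concaveOn
    ((LinearMap.mulLeft ℝ k).concaveOn (convex_Ici 0))

theorem neg_sq_mul_cube_add_le_neg_mul_sq_add {L s : ℝ} (hL : 0 < L) (hs : 1 ≤ L * s) (k : ℝ) :
    -L ^ 2 * s ^ 3 + k * s ≤ -L * s ^ 2 + k * s := by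
  have hs0 : 0 ≤ s := by nlinarith
  nlinarith [mul_nonneg (mul_nonneg hL.le (sq_nonneg s)) (sub_nonneg.2 hs)]

theorem neg_sq_mul_cube_add_lt_of_ne {L s t k : ℝ} (hL : L ≠ 0) (hcrit : 3 * L ^ 2 * t ^ 2 = k)
    (ht : 0 < t) (hs : 0 ≤ s) (hne : s ≠ t) :
    -L ^ 2 * s ^ 3 + k * s < -L ^ 2 * t ^ 3 + k * t := by
  have hdiff : -L ^ 2 * t ^ 3 + k * t - (-L ^ 2 * s ^ 3 + k * s) =
      L ^ 2 * ((s - t) ^ 2 * (s + 2 * t)) := by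
    linear_combination (s - t) * hcrit
  have hpos : 0 < L ^ 2 * ((s - t) ^ 2 * (s + 2 * t)) := by
    have : 0 < (s - t) ^ 2 := by positivity [sub_ne_zero.2 hne]
    positivity
  linarith

theorem stmt_11 (L : ℝ) (hL : 0 < L) :
    StrictConcaveOn ℝ (Set.Ioo 0 (Real.sqrt 3 / L))
      (fun s => min (-L ^ 2 * s ^ 3 + 4 * s) (-L * s ^ 2 + 4 * s)) ∧
    ∀ s ∈ Set.Ioo 0 (Real.sqrt 3 / L), s ≠ Real.sqrt (4 / 3) / L →
      min (-L ^ 2 * s ^ 3 + 4 * s) (-L * s ^ 2 + 4 * s) <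
        min (-L ^ 2 * (Real.sqrt (4 / 3) / L) ^ 3 + 4 * (Real.sqrt (4 / 3) / L))
          (-L * (Real.sqrt (4 / 3) / L) ^ 2 + 4 * (Real.sqrt (4 / 3) / L)) := by
  have hsub : Ioo 0 (√3 / L) ⊆ Ici 0 := fun _ hx => hx.1.le
  have hcubic :=
    (strictConcaveOn_neg_mul_pow_add_mul (pow_pos hL 2) (n := 3) (by norm_num) 4).subset
      hsub (convex_Ioo _ _)
  have hquad := (strictConcaveOn_neg_mul_pow_add_mul hL (n := 2) le_rfl 4).subset
    hsub (convex_Ioo _ _)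
  refine ⟨hcubic.inf hquad, fun s hs hne => ?_⟩
  have hsqrt : √(4 / 3) ^ 2 = 4 / 3 := Real.sq_sqrt (by norm_num)
  have hcrit : 3 * L ^ 2 * (√(4 / 3) / L) ^ 2 = 4 := by
    rw [div_pow, hsqrt]; field_simp
  have hone : 1 ≤ L * (√(4 / 3) / L) := by
    rw [mul_div_cancel₀ _ hL.ne']
    exact Real.one_le_sqrt.2 (by norm_num)
  rw [min_eq_left (neg_sq_mul_cube_add_le_neg_mul_sq_add hL hone 4)]
  exact (min_le_left _ _).trans_lt
    (neg_sq_mul_cube_add_lt_of_ne hL.ne' hcrit (by positivity) hs.1.le hne)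
end

section
/- For every L > 0, Δ > 0, N ≥ 1, and step lengths t_k ∈ (0, 1/L] (k = 1,…,N), there exist an L-smooth function f : ℝ → ℝ with infimum f⋆ = 0, attained at x⋆ = 0, and a starting point x¹ with f(x¹) = Δ, such that the gradient method iterates x^{k+1} = x^k - t_k f′(x^k) satisfy min_{1≤k≤N+1} |f′(x^k)| = ( 4Δ / ( Σ_{k=1}^N min(-L²t_k³+4t_k, -Lt_k²+4t_k) + 2/L ) )^{1/2}; i.e., the worst-case bound of Theorem 2 is attained. -/
open intervalIntegral MeasureTheory

private lemma min_branch {L tj : ℝ} (hL : 0 < L) (h1 : 0 < tj) (h2 : L * tj ≤ 1) :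
    -L * tj ^ 2 + 4 * tj ≤ -L ^ 2 * tj ^ 3 + 4 * tj := by
  nlinarith [mul_le_mul_of_nonneg_right h2 (le_of_lt (mul_pos hL (mul_pos h1 h1)))]

private lemma le_infDist' {s : Set ℝ} (hs : s.Nonempty) {x d : ℝ}
    (h : ∀ y ∈ s, d ≤ dist x y) : d ≤ Metric.infDist x s := by
  by_contra hc
  push_neg at hc
  obtain ⟨y, hy, hlt⟩ := (Metric.infDist_lt_iff hs).mp hc
  exact absurd hlt (not_lt.mpr (h y hy))

private lemma integral_linear (c d a b : ℝ) :
    ∫ u in a..b, (c + d * u) = c * (b - a) + d * (b ^ 2 - a ^ 2) / 2 := by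
  have hint : IntervalIntegrable (fun u : ℝ => d * u) volume a b :=
    (continuous_const.mul continuous_id').intervalIntegrable a b
  rw [intervalIntegral.integral_add intervalIntegrable_const hint,
    intervalIntegral.integral_const, intervalIntegral.integral_const_mul, integral_id]
  simp [smul_eq_mul]
  ring

private lemma integral_valley (g L a b : ℝ) (hab : a ≤ b) :
    ∫ u in a..b, (g - L * min (u - a) (b - u))
      = g * (b - a) - L * (b - a) ^ 2 / 4 := by
  set m := (a + b) / 2 with hm
  have ham : a ≤ m := by rw [hm]; linarith
  have hmb : m ≤ b := by rw [hm]; linarith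
  have hcont : Continuous fun u : ℝ => g - L * min (u - a) (b - u) := by
    apply continuous_const.sub
    exact continuous_const.mul ((continuous_id.sub continuous_const).min
      (continuous_const.sub continuous_id))
  have hsplit := intervalIntegral.integral_add_adjacent_intervals (μ := volume)
    (hcont.intervalIntegrable a m) (hcont.intervalIntegrable m b)
  have h1 : (∫ u in a..m, (g - L * min (u - a) (b - u)))
      = ∫ u in a..m, ((g + L * a) + (-L) * u) := by
    apply intervalIntegral.integral_congr
    intro u hu
    rw [Set.uIcc_of_le ham] at hu
    have hub : u - a ≤ b - u := by
      have := hu.2; rw [hm] at this; linarith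
    show g - L * min (u - a) (b - u) = g + L * a + -L * u
    rw [min_eq_left hub]; ring
  have h2 : (∫ u in m..b, (g - L * min (u - a) (b - u)))
      = ∫ u in m..b, ((g - L * b) + L * u) := by
    apply intervalIntegral.integral_congr
    intro u hu
    rw [Set.uIcc_of_le hmb] at hu
    have hub : b - u ≤ u - a := by
      have := hu.1; rw [hm] at this; linarith
    show g - L * min (u - a) (b - u) = g - L * b + L * u
    rw [min_eq_right hub]; ring
  rw [← hsplit, h1, h2, integral_linear, integral_linear, hm]
  ring

theorem stmt_12 (L Δ : ℝ) (hL : 0 < L) (hΔ : 0 < Δ) (N : ℕ) (hN : 1 ≤ N)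
    (t : ℕ → ℝ) (ht : ∀ k, 1 ≤ k → k ≤ N → t k ∈ Set.Ioc 0 (1 / L)) :
    ∃ (f : ℝ → ℝ) (x : ℕ → ℝ),
      Differentiable ℝ f ∧
      (∀ a b, |deriv f a - deriv f b| ≤ L * |a - b|) ∧
      (∀ y, 0 ≤ f y) ∧ f 0 = 0 ∧ f (x 1) = Δ ∧
      (∀ k, 1 ≤ k → k ≤ N → x (k + 1) = x k - t k * deriv f (x k)) ∧
      (∀ k ∈ Finset.Icc 1 (N + 1),
        Real.sqrt (4 * Δ /
            (∑ j ∈ Finset.Icc 1 N,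
                min (-L ^ 2 * t j ^ 3 + 4 * t j) (-L * t j ^ 2 + 4 * t j) + 2 / L)) ≤
          |deriv f (x k)|) ∧
      (∃ k ∈ Finset.Icc 1 (N + 1),
        |deriv f (x k)| =
          Real.sqrt (4 * Δ /
            (∑ j ∈ Finset.Icc 1 N,
                min (-L ^ 2 * t j ^ 3 + 4 * t j) (-L * t j ^ 2 + 4 * t j) + 2 / L))) := by
  have htpos : ∀ k, 1 ≤ k → k ≤ N → 0 < t k := fun k h1 h2 => (ht k h1 h2).1
  have htle : ∀ k, 1 ≤ k → k ≤ N → L * t k ≤ 1 := by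
    intro k h1 h2
    have h := (ht k h1 h2).2
    rw [le_div_iff₀ hL] at h
    linarith [h]
  set D : ℝ := (∑ j ∈ Finset.Icc 1 N, (4 * t j - L * t j ^ 2)) + 2 / L with hD
  have hterm : ∀ j ∈ Finset.Icc 1 N, 0 < 4 * t j - L * t j ^ 2 := by
    intro j hj; rw [Finset.mem_Icc] at hj
    have h1 := htpos j hj.1 hj.2; have h2 := htle j hj.1 hj.2
    nlinarith
  have hDpos : 0 < D := by
    have h1 : 0 ≤ ∑ j ∈ Finset.Icc 1 N, (4 * t j - L * t j ^ 2) :=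
      Finset.sum_nonneg fun j hj => (hterm j hj).le
    have h2 : 0 < 2 / L := by positivity
    rw [hD]; linarith
  set g : ℝ := Real.sqrt (4 * Δ / D) with hg
  have hgpos : 0 < g := Real.sqrt_pos.mpr (by positivity)
  have hgsq : g ^ 2 = 4 * Δ / D := Real.sq_sqrt (by positivity)
  set x : ℕ → ℝ := fun k => g / L + g * ∑ j ∈ Finset.Icc k N, t j with hx
  have hxtop : x (N + 1) = g / L := by
    simp [hx, Finset.Icc_eq_empty_of_lt (Nat.lt_succ_self N)]
  have hstep : ∀ k, 1 ≤ k → k ≤ N → x k = x (k + 1) + g * t k := by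
    intro k h1 h2
    simp only [hx]
    rw [Finset.Icc_eq_cons_Ioc h2, Finset.sum_cons, ← Finset.Icc_add_one_left_eq_Ioc]
    ring
  have hmono : ∀ j k, 1 ≤ j → j ≤ k → x k ≤ x j := by
    intro j k h1 hjk
    simp only [hx]
    have hsub : Finset.Icc k N ⊆ Finset.Icc j N := Finset.Icc_subset_Icc hjk le_rfl
    have hsum : ∑ i ∈ Finset.Icc k N, t i ≤ ∑ i ∈ Finset.Icc j N, t i := by
      apply Finset.sum_le_sum_of_subset_of_nonneg hsub
      intro i hi _
      rw [Finset.mem_Icc] at hi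
      exact (htpos i (le_trans h1 hi.1) hi.2).le
    have := mul_le_mul_of_nonneg_left hsum hgpos.le
    linarith
  have hxlow : ∀ k, 1 ≤ k → g / L ≤ x k := by
    intro k h1
    simp only [hx]
    have hs : 0 ≤ ∑ j ∈ Finset.Icc k N, t j := by
      apply Finset.sum_nonneg
      intro i hi
      rw [Finset.mem_Icc] at hi
      exact (htpos i (le_trans h1 hi.1) hi.2).le
    nlinarith
  set S : Set ℝ := Set.Ici (x 1) ∪ (x '' Set.Icc 1 (N + 1)) with hS
  have hmemS : ∀ k, 1 ≤ k → k ≤ N + 1 → x k ∈ S := fun k h1 h2 =>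
    Or.inr ⟨k, ⟨h1, h2⟩, rfl⟩
  have hSne : S.Nonempty := ⟨x 1, hmemS 1 le_rfl (by omega)⟩
  have hSlow : ∀ p ∈ S, g / L ≤ p := by
    rintro p (hp | ⟨k, ⟨hk1, hk2⟩, rfl⟩)
    · exact le_trans (hxlow 1 le_rfl) hp
    · exact hxlow k hk1
  set d : ℝ → ℝ := fun u => Metric.infDist u S with hd
  set φ : ℝ → ℝ := fun u => g - L * d u with hφ
  have hdcont : Continuous d := by rw [hd]; exact Metric.continuous_infDist_pt S
  have hφcont : Continuous φ := by
    rw [hφ]; exact continuous_const.sub (continuous_const.mul hdcont)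
  set f : ℝ → ℝ := fun y => ∫ u in (0:ℝ)..y, φ u with hf
  have hderiv : ∀ y, HasDerivAt f (φ y) y := by
    intro y
    rw [hf]
    exact (hφcont.integral_hasStrictDerivAt 0 y).hasDerivAt
  have hderiv' : ∀ y, deriv f y = φ y := fun y => (hderiv y).deriv
  have hdiff : Differentiable ℝ f := fun y => (hderiv y).differentiableAt
  have hlip : ∀ a b, |deriv f a - deriv f b| ≤ L * |a - b| := by
    intro a b
    rw [hderiv' a, hderiv' b]
    have h := (Metric.lipschitz_infDist_pt S).dist_le_mul a b
    rw [Real.dist_eq, Real.dist_eq] at h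
    simp only [NNReal.coe_one, one_mul] at h
    have he : φ a - φ b = L * (Metric.infDist b S - Metric.infDist a S) := by
      simp only [hφ, hd]; ring
    rw [he, abs_mul, abs_of_pos hL]
    have h2 : |Metric.infDist b S - Metric.infDist a S| ≤ |a - b| := by
      rw [abs_sub_comm]; exact h
    exact mul_le_mul_of_nonneg_left h2 hL.le
  have hd_at : ∀ k, 1 ≤ k → k ≤ N + 1 → d (x k) = 0 := by
    intro k h1 h2
    simp only [hd]
    exact Metric.infDist_zero_of_mem (hmemS k h1 h2)
  have hφ_at : ∀ k, 1 ≤ k → k ≤ N + 1 → φ (x k) = g := by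
    intro k h1 h2
    simp only [hφ]
    rw [hd_at k h1 h2]; ring
  have hd_left : ∀ u, u ≤ g / L → d u = g / L - u := by
    intro u hu
    apply le_antisymm
    · calc d u ≤ dist u (x (N + 1)) :=
            Metric.infDist_le_dist_of_mem (hmemS (N + 1) (by omega) le_rfl)
        _ = g / L - u := by
            rw [hxtop, Real.dist_eq, abs_of_nonpos (by linarith)]; ring
    · apply le_infDist' hSne
      intro p hp
      have hgp := hSlow p hp
      rw [Real.dist_eq, abs_sub_comm]
      calc g / L - u ≤ p - u := by linarith
        _ ≤ |p - u| := le_abs_self _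
  have hd_mid : ∀ k, 1 ≤ k → k ≤ N → ∀ u, x (k + 1) ≤ u → u ≤ x k →
      d u = min (u - x (k + 1)) (x k - u) := by
    intro k h1 h2 u hu1 hu2
    apply le_antisymm
    · apply le_min
      · calc d u ≤ dist u (x (k + 1)) :=
              Metric.infDist_le_dist_of_mem (hmemS (k + 1) (by omega) (by omega))
          _ = u - x (k + 1) := by rw [Real.dist_eq, abs_of_nonneg (by linarith)]
      · calc d u ≤ dist u (x k) :=
              Metric.infDist_le_dist_of_mem (hmemS k h1 (by omega))
          _ = x k - u := by rw [Real.dist_eq, abs_of_nonpos (by linarith)]; ring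
    · apply le_infDist' hSne
      rintro p (hp | ⟨j, ⟨hj1, hj2⟩, rfl⟩)
      · have hx1k : x k ≤ x 1 := hmono 1 k le_rfl h1
        rw [Real.dist_eq, abs_sub_comm]
        calc min (u - x (k + 1)) (x k - u) ≤ x k - u := min_le_right _ _
          _ ≤ p - u := by simp only [Set.mem_Ici] at hp; linarith
          _ ≤ |p - u| := le_abs_self _
      · rcases le_or_gt j k with hjk | hjk
        · have hxx : x k ≤ x j := hmono j k hj1 hjk
          rw [Real.dist_eq, abs_sub_comm]
          calc min (u - x (k + 1)) (x k - u) ≤ x k - u := min_le_right _ _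
            _ ≤ x j - u := by linarith
            _ ≤ |x j - u| := le_abs_self _
        · have hxx : x j ≤ x (k + 1) := hmono (k + 1) j (by omega) hjk
          rw [Real.dist_eq]
          calc min (u - x (k + 1)) (x k - u) ≤ u - x (k + 1) := min_le_left _ _
            _ ≤ u - x j := by linarith
            _ ≤ |u - x j| := le_abs_self _
  have hsand : ∀ n, 1 ≤ n → n ≤ N → ∀ u, x (n + 1) ≤ u → u ≤ x 1 →
      ∃ k, 1 ≤ k ∧ k ≤ n ∧ x (k + 1) ≤ u ∧ u ≤ x k := by
    intro n
    induction n with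
    | zero => omega
    | succ m ih =>
      intro h1 h2 u hu1 hu2
      rcases le_or_gt u (x (m + 1)) with h | h
      · exact ⟨m + 1, by omega, le_rfl, hu1, h⟩
      · have hm1 : 1 ≤ m := by
          by_contra hm
          have hm0 : m = 0 := by omega
          rw [hm0] at h
          linarith
        obtain ⟨k, hk1, hk2, hk3, hk4⟩ := ih hm1 (by omega) u h.le hu2
        exact ⟨k, hk1, by omega, hk3, hk4⟩
  have hd_small : ∀ u, 0 ≤ u → L * d u ≤ g := by
    intro u hu
    have hLg : L * (g / L) = g := by field_simp
    rcases le_or_gt u (g / L) with h | h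
    · rw [hd_left u h]
      nlinarith
    · rcases le_or_gt (x 1) u with h1 | h1
      · have hz : d u = 0 := by
          simp only [hd]
          exact Metric.infDist_zero_of_mem (Or.inl h1)
        rw [hz]
        nlinarith
      · obtain ⟨k, hk1, hk2, hk3, hk4⟩ := hsand N hN le_rfl u (by rw [hxtop]; linarith) h1.le
        have hgap : x k - x (k + 1) = g * t k := by rw [hstep k hk1 hk2]; ring
        have hd1 : d u ≤ u - x (k + 1) := by
          calc d u ≤ dist u (x (k + 1)) :=
                Metric.infDist_le_dist_of_mem (hmemS (k + 1) (by omega) (by omega))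
            _ = u - x (k + 1) := by rw [Real.dist_eq, abs_of_nonneg (by linarith)]
        have ht2 : t k ≤ 1 / L := (ht k hk1 hk2).2
        have : d u ≤ g / L := by
          have : u - x (k + 1) ≤ g * t k := by linarith
          have h3 : g * t k ≤ g * (1 / L) := mul_le_mul_of_nonneg_left ht2 hgpos.le
          have h4 : g * (1 / L) = g / L := by ring
          linarith
        nlinarith
  have hφ_nonneg : ∀ u, 0 ≤ u → 0 ≤ φ u := by
    intro u hu
    simp only [hφ]
    linarith [hd_small u hu]
  have hφ_nonpos : ∀ u, u ≤ 0 → φ u ≤ 0 := by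
    intro u hu
    have hge : g / L - u ≤ d u := by
      apply le_infDist' hSne
      intro p hp
      have hgp := hSlow p hp
      rw [Real.dist_eq, abs_sub_comm]
      calc g / L - u ≤ p - u := by linarith
        _ ≤ |p - u| := le_abs_self _
    simp only [hφ]
    have hLg : L * (g / L) = g := by field_simp
    nlinarith [mul_le_mul_of_nonneg_left hge hL.le]
  have hf_nonneg : ∀ y, 0 ≤ f y := by
    intro y
    rcases le_or_gt 0 y with hy | hy
    · simp only [hf]
      exact intervalIntegral.integral_nonneg hy fun u hu => hφ_nonneg u hu.1
    · simp only [hf]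
      have h0 : 0 ≤ ∫ u in y..(0:ℝ), -φ u :=
        intervalIntegral.integral_nonneg hy.le fun u hu => neg_nonneg.mpr (hφ_nonpos u hu.2)
      rw [intervalIntegral.integral_neg] at h0
      rw [intervalIntegral.integral_symm y 0]
      linarith
  have hf0 : f 0 = 0 := by simp only [hf]; exact intervalIntegral.integral_same
  -- the main value computation
  have hIleft : (∫ u in (0:ℝ)..(g / L), φ u) = g ^ 2 / (2 * L) := by
    have hEq : Set.EqOn φ (fun u => 0 + L * u) (Set.uIcc 0 (g / L)) := by
      intro u hu
      rw [Set.uIcc_of_le (by positivity)] at hu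
      simp only [hφ]
      rw [hd_left u hu.2]
      field_simp
      ring
    rw [intervalIntegral.integral_congr hEq, integral_linear]
    field_simp
    ring
  have hImid : ∀ k, 1 ≤ k → k ≤ N →
      (∫ u in (x (k + 1))..(x k), φ u) = g ^ 2 * t k - L * g ^ 2 * t k ^ 2 / 4 := by
    intro k h1 h2
    have hle : x (k + 1) ≤ x k := by
      rw [hstep k h1 h2]
      nlinarith [htpos k h1 h2]
    have hEq : Set.EqOn φ (fun u => g - L * min (u - x (k + 1)) (x k - u))
        (Set.uIcc (x (k + 1)) (x k)) := by
      intro u hu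
      rw [Set.uIcc_of_le hle] at hu
      simp only [hφ]
      rw [hd_mid k h1 h2 u hu.1 hu.2]
    rw [intervalIntegral.integral_congr hEq, integral_valley _ _ _ _ hle]
    have hgap : x k - x (k + 1) = g * t k := by rw [hstep k h1 h2]; ring
    rw [hgap]
    ring
  have htel : (∫ u in (x (N + 1))..(x 1), φ u)
      = ∑ k ∈ Finset.Icc 1 N, ∫ u in (x (k + 1))..(x k), φ u := by
    have h0 := intervalIntegral.sum_integral_adjacent_intervals
      (μ := volume) (f := φ) (a := fun i => x (N + 1 - i)) (n := N)
      (fun i _ => hφcont.intervalIntegrable _ _)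
    simp only [Nat.sub_zero, show N + 1 - N = 1 from by omega] at h0
    rw [← h0]
    have e2 : ∑ k ∈ Finset.Icc 1 N, (∫ u in (x (k + 1))..(x k), φ u)
        = ∑ i ∈ Finset.range N, ∫ u in (x (1 + i + 1))..(x (1 + i)), φ u := by
      rw [← Finset.Ico_add_one_right_eq_Icc, Finset.sum_Ico_eq_sum_range]
      simp
    rw [e2, ← Finset.sum_range_reflect]
    apply Finset.sum_congr rfl
    intro i hi
    rw [Finset.mem_range] at hi
    have e3 : N + 1 - (N - 1 - i) = 1 + i + 1 := by omega
    have e4 : N + 1 - (N - 1 - i + 1) = 1 + i := by omega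
    rw [e3, e4]
  have hfx1 : f (x 1) = Δ := by
    have hadj := intervalIntegral.integral_add_adjacent_intervals (μ := volume)
      (hφcont.intervalIntegrable 0 (x (N + 1))) (hφcont.intervalIntegrable (x (N + 1)) (x 1))
    simp only [hf]
    rw [← hadj, htel, hxtop, hIleft]
    have hsum2 : ∑ k ∈ Finset.Icc 1 N, (∫ u in (x (k + 1))..(x k), φ u)
        = ∑ k ∈ Finset.Icc 1 N, (g ^ 2 * t k - L * g ^ 2 * t k ^ 2 / 4) :=
      Finset.sum_congr rfl fun k hk =>
        hImid k (Finset.mem_Icc.mp hk).1 (Finset.mem_Icc.mp hk).2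
    rw [hsum2]
    have hsum : ∑ k ∈ Finset.Icc 1 N, (g ^ 2 * t k - L * g ^ 2 * t k ^ 2 / 4)
        = g ^ 2 / 4 * ∑ k ∈ Finset.Icc 1 N, (4 * t k - L * t k ^ 2) := by
      rw [Finset.mul_sum]
      apply Finset.sum_congr rfl
      intro k _
      ring
    have hSig : ∑ k ∈ Finset.Icc 1 N, (4 * t k - L * t k ^ 2) = D - 2 / L := by
      rw [hD]; ring
    rw [hsum, hSig, hgsq]
    field_simp
    ring
  have hmin : ∀ j ∈ Finset.Icc 1 N,
      min (-L ^ 2 * t j ^ 3 + 4 * t j) (-L * t j ^ 2 + 4 * t j) = 4 * t j - L * t j ^ 2 := by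
    intro j hj
    rw [Finset.mem_Icc] at hj
    have h1 := htpos j hj.1 hj.2
    have h2 := htle j hj.1 hj.2
    rw [min_eq_right (min_branch hL h1 h2)]
    ring
  have hUD : Real.sqrt (4 * Δ /
      (∑ j ∈ Finset.Icc 1 N,
          min (-L ^ 2 * t j ^ 3 + 4 * t j) (-L * t j ^ 2 + 4 * t j) + 2 / L)) = g := by
    rw [Finset.sum_congr rfl hmin, ← hD, ← hg]
  refine ⟨f, x, hdiff, hlip, hf_nonneg, hf0, hfx1, ?_, ?_, ?_⟩
  · intro k h1 h2
    rw [hderiv' (x k), hφ_at k h1 (by omega), hstep k h1 h2]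
    ring
  · intro k hk
    rw [Finset.mem_Icc] at hk
    rw [hderiv' (x k), hφ_at k hk.1 hk.2, hUD, abs_of_pos hgpos]
  · refine ⟨1, Finset.mem_Icc.mpr ⟨le_rfl, by omega⟩, ?_⟩
    rw [hderiv' (x 1), hφ_at 1 le_rfl (by omega), hUD, abs_of_pos hgpos]
end

section
/- The piecewise quadratic function f : ℝ → ℝ defined (for parameters L > 0, U > 0, breakpoints l_{N+2}=0 < l_{N+1} < ⋯ < l_1 with l_i - l_{i+1} = U t_i for t_i ∈ (0,1/L], t_{N+1}=1/L, and suitable values f^i) by: f(x) = (L/2)(x−l_1)² + U(x−l_1) + f¹ on [(l_1+l_2)/2, ∞); f(x) = −(L/2)(x−l_{i+1})² + U(x−l_{i+1}) + f^{i+1} on [l_{i+1}, (l_i+l_{i+1})/2]; f(x) = (L/2)(x−l_{i+1})² + U(x−l_{i+1}) + f^{i+1} on [(l_{i+1}+l_{i+2})/2, l_{i+1}]; and f(x) = (L/2)x² on (−∞, l_{N+1}/2]; is continuously differentiable with L-Lipschitz derivative, satisfies f ≥ 0 with minimum 0 at x = 0, and satisfies f(l_i) = f^i and f′(l_i) = U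 for i = 1,…,N+1. -/
/-!
The derivative of `f` is `g x = U - L * dist (x, {l 1, …, l (N+1)})` for `x ≤ l 1`, continued
by the line `U + L * (x - l 1)`. Written as the upper envelope of that line and of the tents
`U - L * |x - l i|`, it is visibly `L`-Lipschitz. On the cell `[m (i+1), m i]` of the node
`l (i+1)`, with `m i = (l i + l (i+1)) / 2`, the two quadratic pieces combine into
`U * s - L / 2 * s * |s| + fv (i+1)` with `s = x - l (i+1)`, a `C¹` function whose derivative is
the tent at `l (i+1)`; gluing the cells along closed half-lines gives `f' = g` everywhere.
Since the gaps `l i - l (i+1) = U * t i` are at most `U / L`, `g ≥ 0` on `[0, ∞)`, while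
`g x = L * x` for `x ≤ l (N+1)`; so `f` decreases up to `0` and increases after it, and `f 0 = 0`.
-/

open Set Filter Topology

section Gluing

variable {𝕜 F : Type*} [NontriviallyNormedField 𝕜] [NormedAddCommGroup F] [NormedSpace 𝕜 F]
  {f F' : 𝕜 → F} {g : 𝕜 → F} {s t : Set 𝕜}

theorem hasDerivWithinAt_of_eqOn (hf : EqOn f F' s) (hF : ∀ y ∈ s, HasDerivAt F' (g y) y) :
    ∀ y ∈ s, HasDerivWithinAt f (g y) s y :=
  fun y hy => (hF y hy).hasDerivWithinAt.congr hf (hf hy)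

theorem hasDerivWithinAt_union_of_isClosed (hs : IsClosed s) (ht : IsClosed t)
    (hfs : ∀ y ∈ s, HasDerivWithinAt f (g y) s y) (hft : ∀ y ∈ t, HasDerivWithinAt f (g y) t y)
    (y : 𝕜) : HasDerivWithinAt f (g y) (s ∪ t) y := by
  have side : ∀ u : Set 𝕜, IsClosed u → (∀ y ∈ u, HasDerivWithinAt f (g y) u y) →
      HasDerivWithinAt f (g y) u y := by
    intro u hu hfu
    by_cases h : y ∈ u
    · exact hfu y h
    · exact HasFDerivWithinAt.of_notMem_closure (by rwa [hu.closure_eq])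
  exact (side s hs hfs).union (side t ht hft)

end Gluing

theorem hasDerivAt_mul_abs (x : ℝ) : HasDerivAt (fun y => y * |y|) (2 * |x|) x := by
  have hneg := hasDerivWithinAt_of_eqOn (f := fun y : ℝ => y * |y|) (F' := fun y => -y ^ 2)
    (g := fun y => 2 * |y|) (s := Iic 0)
    (fun y hy => by simp only [abs_of_nonpos (mem_Iic.mp hy)]; ring)
    (fun y hy => ((hasDerivAt_pow 2 y).neg).congr_deriv (by simp [abs_of_nonpos (mem_Iic.mp hy)]))
  have hpos := hasDerivWithinAt_of_eqOn (f := fun y : ℝ => y * |y|) (F' := fun y => y ^ 2)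
    (g := fun y => 2 * |y|) (s := Ici 0)
    (fun y hy => by simp only [abs_of_nonneg (mem_Ici.mp hy)]; ring)
    (fun y hy => (hasDerivAt_pow 2 y).congr_deriv (by simp [abs_of_nonneg (mem_Ici.mp hy)]))
  have := hasDerivWithinAt_union_of_isClosed isClosed_Iic isClosed_Ici hneg hpos x
  rwa [Iic_union_Ici, hasDerivWithinAt_univ] at this

theorem isMinOn_univ_of_hasDerivAt {f g : ℝ → ℝ} {c : ℝ} (hf : ∀ x, HasDerivAt f (g x) x)
    (hneg : ∀ x, x < c → g x ≤ 0) (hpos : ∀ x, c < x → 0 ≤ g x) : IsMinOn f univ c := by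
  have hdiff : Differentiable ℝ f := fun x => (hf x).differentiableAt
  intro x _
  rcases le_total c x with h | h
  · refine monotoneOn_of_deriv_nonneg (convex_Ici c) hdiff.continuous.continuousOn
      hdiff.differentiableOn (fun y hy => ?_) self_mem_Ici h h
    rw [interior_Ici] at hy
    exact (hf y).deriv ▸ hpos y hy
  · refine antitoneOn_of_deriv_nonpos (convex_Iic c) hdiff.continuous.continuousOn
      hdiff.differentiableOn (fun y hy => ?_) h self_mem_Iic h
    rw [interior_Iic] at hy
    exact (hf y).deriv ▸ hneg y hy

theorem abs_sub_le_abs_sub_of_mul_nonneg {x p q : ℝ} (h : 0 ≤ (q - p) * (2 * x - p - q)) :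
    |x - q| ≤ |x - p| :=
  sq_le_sq.mp (by nlinarith)

noncomputable def tentEnvelope (L U : ℝ) (l : ℕ → ℝ) (N : ℕ) (x : ℝ) : ℝ :=
  max (U + L * (x - l 1)) ((Finset.Icc 1 (N + 1)).sup' ⟨1, by simp⟩ fun i => U - L * |x - l i|)

section TentEnvelope

variable {L U : ℝ} {l : ℕ → ℝ} {N : ℕ}

theorem line_le_tentEnvelope (x : ℝ) : U + L * (x - l 1) ≤ tentEnvelope L U l N x :=
  le_max_left _ _

theorem tent_le_tentEnvelope {i : ℕ} (hi : i ∈ Finset.Icc 1 (N + 1)) (x : ℝ) :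
    U - L * |x - l i| ≤ tentEnvelope L U l N x :=
  le_max_of_le_right (Finset.le_sup' (fun i => U - L * |x - l i|) hi)

theorem tentEnvelope_le_add (hL : 0 ≤ L) (a b : ℝ) :
    tentEnvelope L U l N a ≤ tentEnvelope L U l N b + L * |a - b| := by
  refine max_le ?_ (Finset.sup'_le _ _ fun i hi => ?_)
  · have := line_le_tentEnvelope (L := L) (U := U) (l := l) (N := N) b
    nlinarith [le_abs_self (a - b)]
  · have := tent_le_tentEnvelope (U := U) (L := L) (l := l) hi b
    have htri := abs_sub_comm b a ▸ abs_sub_le b a (l i)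
    nlinarith [mul_le_mul_of_nonneg_left htri hL]

theorem abs_tentEnvelope_sub_le (hL : 0 ≤ L) (a b : ℝ) :
    |tentEnvelope L U l N a - tentEnvelope L U l N b| ≤ L * |a - b| := by
  rw [abs_sub_le_iff]
  constructor
  · linarith [tentEnvelope_le_add (U := U) (l := l) (N := N) hL a b]
  · linarith [abs_sub_comm a b ▸ tentEnvelope_le_add (U := U) (l := l) (N := N) hL b a]

theorem tentEnvelope_eq_tent (hL : 0 ≤ L) {j : ℕ} (hj : j ∈ Finset.Icc 1 (N + 1)) {x : ℝ}
    (hnear : ∀ i ∈ Finset.Icc 1 (N + 1), |x - l j| ≤ |x - l i|) (hline : |x - l j| ≤ l 1 - x) :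
    tentEnvelope L U l N x = U - L * |x - l j| := by
  refine le_antisymm (max_le ?_ (Finset.sup'_le _ _ fun i hi => ?_)) (tent_le_tentEnvelope hj x)
  · nlinarith
  · nlinarith [hnear i hi]

theorem tentEnvelope_eq_line (hL : 0 ≤ L) (hl : AntitoneOn l (Set.Icc 1 (N + 2))) {x : ℝ}
    (hx : (l 1 + l 2) / 2 ≤ x) : tentEnvelope L U l N x = U + L * (x - l 1) := by
  refine le_antisymm (max_le le_rfl (Finset.sup'_le _ _ fun i hi => ?_)) (line_le_tentEnvelope x)
  obtain ⟨hi1, hiN⟩ := Finset.mem_Icc.mp hi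
  have hnear : |x - l 1| ≤ |x - l i| := by
    rcases eq_or_lt_of_le hi1 with rfl | hi2
    · exact le_rfl
    · have : l i ≤ l 1 := hl ⟨le_rfl, by omega⟩ ⟨hi1, by omega⟩ hi1
      have : l i ≤ l 2 := hl ⟨by omega, by omega⟩ ⟨hi1, by omega⟩ hi2
      exact abs_sub_le_abs_sub_of_mul_nonneg (by nlinarith)
  nlinarith [neg_abs_le (x - l 1)]

theorem tentEnvelope_node (hL : 0 ≤ L) (hl : AntitoneOn l (Set.Icc 1 (N + 2))) {i : ℕ}
    (hi : i ∈ Finset.Icc 1 (N + 1)) : tentEnvelope L U l N (l i) = U := by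
  obtain ⟨hi1, hiN⟩ := Finset.mem_Icc.mp hi
  have : l i ≤ l 1 := hl ⟨le_rfl, by omega⟩ ⟨hi1, by omega⟩ hi1
  rw [tentEnvelope_eq_tent hL hi (fun _ _ => by simp) (by simpa using this)]
  simp

theorem tentEnvelope_eq_mul (hL : 0 ≤ L) (hl : AntitoneOn l (Set.Icc 1 (N + 2)))
    (hlast : L * l (N + 1) = U) {x : ℝ} (hx : x ≤ l (N + 1)) : tentEnvelope L U l N x = L * x := by
  have hlow : ∀ i ∈ Finset.Icc 1 (N + 1), l (N + 1) ≤ l i := fun i hi => by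
    obtain ⟨hi1, hiN⟩ := Finset.mem_Icc.mp hi
    exact hl ⟨hi1, by omega⟩ ⟨by omega, by omega⟩ hiN
  have habs : ∀ i ∈ Finset.Icc 1 (N + 1), |x - l i| = l i - x := fun i hi => by
    rw [abs_of_nonpos (by linarith [hlow i hi]), neg_sub]
  have hlast_mem : N + 1 ∈ Finset.Icc 1 (N + 1) := Finset.right_mem_Icc.mpr (by omega)
  have hnear : ∀ i ∈ Finset.Icc 1 (N + 1), |x - l (N + 1)| ≤ |x - l i| := fun i hi => by
    rw [habs _ hlast_mem, habs i hi]
    linarith [hlow i hi]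
  have hline : |x - l (N + 1)| ≤ l 1 - x := by
    linarith [habs _ hlast_mem, hlow 1 (Finset.left_mem_Icc.mpr (by omega))]
  rw [tentEnvelope_eq_tent hL hlast_mem hnear hline, habs _ hlast_mem]
  linear_combination -hlast

theorem tentEnvelope_cell (hL : 0 ≤ L) (hl : AntitoneOn l (Set.Icc 1 (N + 2))) {j : ℕ}
    (hj1 : 1 ≤ j) (hjN : j ≤ N) {x : ℝ} (hlo : (l (j + 1) + l (j + 2)) / 2 ≤ x)
    (hhi : x ≤ (l j + l (j + 1)) / 2) : tentEnvelope L U l N x = U - L * |x - l (j + 1)| := by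
  have hmono : ∀ {a b}, 1 ≤ a → a ≤ b → b ≤ N + 2 → l b ≤ l a := fun ha hab hb =>
    hl ⟨ha, by omega⟩ ⟨by omega, hb⟩ hab
  have hnear : ∀ i ∈ Finset.Icc 1 (N + 1), |x - l (j + 1)| ≤ |x - l i| := fun i hi => by
    obtain ⟨hi1, hiN⟩ := Finset.mem_Icc.mp hi
    apply abs_sub_le_abs_sub_of_mul_nonneg
    rcases le_or_gt i j with hij | hji
    · have := hmono hi1 hij (by omega)
      have := hmono hj1 (Nat.le_succ j) (by omega)
      exact mul_nonneg_of_nonpos_of_nonpos (by linarith) (by linarith)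
    rcases (show i = j + 1 ∨ j + 2 ≤ i by omega) with rfl | hij
    · simp
    · have := hmono (by omega) hij (by omega)
      have := hmono (by omega) (Nat.le_succ (j + 1)) (by omega)
      exact mul_nonneg (by linarith) (by linarith)
  have := hmono le_rfl hj1 (by omega)
  have := hmono hj1 (Nat.le_succ j) (by omega)
  exact tentEnvelope_eq_tent hL (Finset.mem_Icc.mpr ⟨by omega, by omega⟩) hnear
    (abs_le'.mpr ⟨by linarith, by linarith⟩)

theorem tentEnvelope_nonneg (hL : 0 ≤ L) (hU : 0 ≤ U)
    (hgap : ∀ i, 1 ≤ i → i ≤ N + 1 → L * (l i - l (i + 1)) ≤ U) (hzero : l (N + 2) = 0) {x : ℝ}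
    (hx : 0 ≤ x) : 0 ≤ tentEnvelope L U l N x := by
  suffices h : ∀ k ≤ N + 1, ∀ x, l (k + 1) ≤ x → 0 ≤ tentEnvelope L U l N x from
    h (N + 1) le_rfl x (hzero ▸ hx)
  intro k
  induction k with
  | zero =>
    intro _ x hx
    nlinarith [line_le_tentEnvelope (L := L) (U := U) (l := l) (N := N) x]
  | succ k ih =>
    intro hk x hx
    rcases le_or_gt (l (k + 1)) x with hx' | hx'
    · exact ih (by omega) x hx'
    · have htent := tent_le_tentEnvelope (L := L) (U := U) (l := l) (N := N)
        (i := k + 1) (Finset.mem_Icc.mpr ⟨by omega, hk⟩) x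
      rw [abs_of_neg (by linarith), neg_sub] at htent
      nlinarith [hgap (k + 1) (by omega) hk]

theorem tentEnvelope_nonpos (hL : 0 ≤ L) (hl : AntitoneOn l (Set.Icc 1 (N + 2)))
    (hlast : L * l (N + 1) = U) (hzero : l (N + 2) = 0) {x : ℝ} (hx : x ≤ 0) :
    tentEnvelope L U l N x ≤ 0 := by
  have : l (N + 2) ≤ l (N + 1) := hl ⟨by omega, by omega⟩ ⟨by omega, le_rfl⟩ (by omega)
  rw [tentEnvelope_eq_mul hL hl hlast (by linarith)]
  exact mul_nonpos_of_nonneg_of_nonpos hL hx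

end TentEnvelope

theorem hasDerivAt_quadratic (a u v c x : ℝ) :
    HasDerivAt (fun y => a * (y - c) ^ 2 + u * (y - c) + v) (2 * a * (x - c) + u) x := by
  have hshift : HasDerivAt (fun y => y - c) 1 x := (hasDerivAt_id x).sub_const c
  exact ((((hshift.pow 2).const_mul a).add (hshift.const_mul u)).add_const v).congr_deriv
    (by push_cast; ring)

theorem hasDerivAt_signedQuadratic (a u v c x : ℝ) :
    HasDerivAt (fun y => a * ((y - c) * |y - c|) + u * (y - c) + v) (2 * a * |x - c| + u) x := by
  have hshift : HasDerivAt (fun y => y - c) 1 x := (hasDerivAt_id x).sub_const c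
  exact ((((hasDerivAt_mul_abs (x - c)).comp_sub_const x c).const_mul a).add
    (hshift.const_mul u)).add_const v |>.congr_deriv (by ring)

section Pieces

variable {L U : ℝ} {l fv : ℕ → ℝ} {N : ℕ} {f : ℝ → ℝ}

theorem hasDerivWithinAt_top_cell (hL : 0 ≤ L) (hl : AntitoneOn l (Set.Icc 1 (N + 2)))
    (hpiece1 : ∀ x, (l 1 + l 2) / 2 ≤ x →
      f x = L / 2 * (x - l 1) ^ 2 + U * (x - l 1) + fv 1) :
    ∀ y ∈ Ici ((l 1 + l 2) / 2),
      HasDerivWithinAt f (tentEnvelope L U l N y) (Ici ((l 1 + l 2) / 2)) y :=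
  hasDerivWithinAt_of_eqOn (fun y hy => hpiece1 y hy) fun y hy => by
    rw [tentEnvelope_eq_line hL hl hy]
    exact (hasDerivAt_quadratic (L / 2) U (fv 1) (l 1) y).congr_deriv (by ring)

theorem hasDerivWithinAt_node_cell (hL : 0 ≤ L) (hl : AntitoneOn l (Set.Icc 1 (N + 2)))
    (hpiece2 : ∀ i, 1 ≤ i → i ≤ N → ∀ x, l (i + 1) ≤ x → x ≤ (l i + l (i + 1)) / 2 →
      f x = -(L / 2) * (x - l (i + 1)) ^ 2 + U * (x - l (i + 1)) + fv (i + 1))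
    (hpiece3 : ∀ i, 1 ≤ i → i ≤ N → ∀ x, (l (i + 1) + l (i + 2)) / 2 ≤ x → x ≤ l (i + 1) →
      f x = L / 2 * (x - l (i + 1)) ^ 2 + U * (x - l (i + 1)) + fv (i + 1))
    {j : ℕ} (hj1 : 1 ≤ j) (hjN : j ≤ N) :
    ∀ y ∈ Icc ((l (j + 1) + l (j + 2)) / 2) ((l j + l (j + 1)) / 2),
      HasDerivWithinAt f (tentEnvelope L U l N y)
        (Icc ((l (j + 1) + l (j + 2)) / 2) ((l j + l (j + 1)) / 2)) y := by
  refine hasDerivWithinAt_of_eqOn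
    (F' := fun y =>
      -(L / 2) * ((y - l (j + 1)) * |y - l (j + 1)|) + U * (y - l (j + 1)) + fv (j + 1))
    (fun y hy => ?_) fun y hy => ?_
  · rcases le_total y (l (j + 1)) with h | h
    · rw [hpiece3 j hj1 hjN y hy.1 h]
      simp only [abs_of_nonpos (sub_nonpos.2 h)]
      ring
    · rw [hpiece2 j hj1 hjN y h hy.2]
      simp only [abs_of_nonneg (sub_nonneg.2 h)]
      ring
  · rw [tentEnvelope_cell hL hl hj1 hjN hy.1 hy.2]
    exact (hasDerivAt_signedQuadratic (-(L / 2)) U (fv (j + 1)) (l (j + 1)) y).congr_deriv (by ring)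

theorem hasDerivWithinAt_bottom_cell (hL : 0 ≤ L) (hl : AntitoneOn l (Set.Icc 1 (N + 2)))
    (hlast : L * l (N + 1) = U) (hzero : l (N + 2) = 0)
    (hpiece4 : ∀ x, x ≤ l (N + 1) / 2 → f x = L / 2 * x ^ 2) :
    ∀ y ∈ Iic (l (N + 1) / 2),
      HasDerivWithinAt f (tentEnvelope L U l N y) (Iic (l (N + 1) / 2)) y := by
  have hpos : 0 ≤ l (N + 1) := hzero ▸ hl ⟨by omega, by omega⟩ ⟨by omega, le_rfl⟩ (by omega)
  refine hasDerivWithinAt_of_eqOn (fun y hy => hpiece4 y hy) fun y hy => ?_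
  rw [tentEnvelope_eq_mul hL hl hlast (by linarith [mem_Iic.mp hy])]
  exact ((hasDerivAt_pow 2 y).const_mul (L / 2)).congr_deriv (by push_cast; ring)

theorem hasDerivWithinAt_Ici_midpoint (hL : 0 ≤ L) (hl : AntitoneOn l (Set.Icc 1 (N + 2)))
    (hpiece1 : ∀ x, (l 1 + l 2) / 2 ≤ x →
      f x = L / 2 * (x - l 1) ^ 2 + U * (x - l 1) + fv 1)
    (hpiece2 : ∀ i, 1 ≤ i → i ≤ N → ∀ x, l (i + 1) ≤ x → x ≤ (l i + l (i + 1)) / 2 →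
      f x = -(L / 2) * (x - l (i + 1)) ^ 2 + U * (x - l (i + 1)) + fv (i + 1))
    (hpiece3 : ∀ i, 1 ≤ i → i ≤ N → ∀ x, (l (i + 1) + l (i + 2)) / 2 ≤ x → x ≤ l (i + 1) →
      f x = L / 2 * (x - l (i + 1)) ^ 2 + U * (x - l (i + 1)) + fv (i + 1))
    {k : ℕ} (hk1 : 1 ≤ k) (hkN : k ≤ N + 1) (y : ℝ) :
    HasDerivWithinAt f (tentEnvelope L U l N y) (Ici ((l k + l (k + 1)) / 2)) y := by
  induction k, hk1 using Nat.le_induction generalizing y with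
  | base =>
    have htop := hasDerivWithinAt_top_cell (N := N) hL hl hpiece1
    have := hasDerivWithinAt_union_of_isClosed isClosed_Ici isClosed_Ici htop htop y
    rwa [union_self] at this
  | succ j hj1 ih =>
    have hmid : (l (j + 1) + l (j + 2)) / 2 ≤ (l j + l (j + 1)) / 2 := by
      have : l (j + 1) ≤ l j := hl ⟨hj1, by omega⟩ ⟨by omega, by omega⟩ (by omega)
      have : l (j + 2) ≤ l (j + 1) := hl ⟨by omega, by omega⟩ ⟨by omega, by omega⟩ (by omega)
      linarith
    have := hasDerivWithinAt_union_of_isClosed isClosed_Icc isClosed_Ici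
      (hasDerivWithinAt_node_cell hL hl hpiece2 hpiece3 hj1 (by omega))
      (fun y _ => ih (by omega) y) y
    rwa [Icc_union_Ici_eq_Ici hmid] at this

theorem hasDerivAt_of_pieces (hL : 0 ≤ L) (hl : AntitoneOn l (Set.Icc 1 (N + 2)))
    (hlast : L * l (N + 1) = U) (hzero : l (N + 2) = 0)
    (hpiece1 : ∀ x, (l 1 + l 2) / 2 ≤ x →
      f x = L / 2 * (x - l 1) ^ 2 + U * (x - l 1) + fv 1)
    (hpiece2 : ∀ i, 1 ≤ i → i ≤ N → ∀ x, l (i + 1) ≤ x → x ≤ (l i + l (i + 1)) / 2 →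
      f x = -(L / 2) * (x - l (i + 1)) ^ 2 + U * (x - l (i + 1)) + fv (i + 1))
    (hpiece3 : ∀ i, 1 ≤ i → i ≤ N → ∀ x, (l (i + 1) + l (i + 2)) / 2 ≤ x → x ≤ l (i + 1) →
      f x = L / 2 * (x - l (i + 1)) ^ 2 + U * (x - l (i + 1)) + fv (i + 1))
    (hpiece4 : ∀ x, x ≤ l (N + 1) / 2 → f x = L / 2 * x ^ 2) (x : ℝ) :
    HasDerivAt f (tentEnvelope L U l N x) x := by
  have hupper := hasDerivWithinAt_Ici_midpoint hL hl hpiece1 hpiece2 hpiece3 (k := N + 1) (by omega)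
    le_rfl
  rw [hzero, add_zero] at hupper
  have := hasDerivWithinAt_union_of_isClosed isClosed_Iic isClosed_Ici
    (hasDerivWithinAt_bottom_cell hL hl hlast hzero hpiece4) (fun y _ => hupper y) x
  rwa [Iic_union_Ici, hasDerivWithinAt_univ] at this

theorem apply_node_eq (hl : AntitoneOn l (Set.Icc 1 (N + 2)))
    (hpiece1 : ∀ x, (l 1 + l 2) / 2 ≤ x →
      f x = L / 2 * (x - l 1) ^ 2 + U * (x - l 1) + fv 1)
    (hpiece2 : ∀ i, 1 ≤ i → i ≤ N → ∀ x, l (i + 1) ≤ x → x ≤ (l i + l (i + 1)) / 2 →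
      f x = -(L / 2) * (x - l (i + 1)) ^ 2 + U * (x - l (i + 1)) + fv (i + 1))
    {i : ℕ} (hi1 : 1 ≤ i) (hiN : i ≤ N + 1) : f (l i) = fv i := by
  obtain rfl | ⟨j, hj1, rfl⟩ : i = 1 ∨ ∃ j, 1 ≤ j ∧ i = j + 1 :=
    (eq_or_lt_of_le hi1).imp Eq.symm fun h => ⟨i - 1, by omega, by omega⟩
  · have : l 2 ≤ l 1 := hl ⟨le_rfl, by omega⟩ ⟨by omega, by omega⟩ (by omega)
    rw [hpiece1 (l 1) (by linarith)]
    ring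
  · have : l (j + 1) ≤ l j := hl ⟨hj1, by omega⟩ ⟨by omega, by omega⟩ (by omega)
    rw [hpiece2 j hj1 (by omega) (l (j + 1)) le_rfl (by linarith)]
    ring

end Pieces

section PartialSums

variable {U : ℝ} {t l : ℕ → ℝ} {N : ℕ}

theorem sub_succ_eq_of_partialSum (hl : ∀ i, l i = U * ∑ k ∈ Finset.Icc i (N + 1), t k) {i : ℕ}
    (hi : i ≤ N + 1) : l i - l (i + 1) = U * t i := by
  rw [hl, hl, Finset.Icc_eq_cons_Ioc hi, Finset.sum_cons, ← Finset.Icc_add_one_left_eq_Ioc]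
  ring

theorem eq_zero_of_partialSum (hl : ∀ i, l i = U * ∑ k ∈ Finset.Icc i (N + 1), t k) :
    l (N + 2) = 0 := by
  rw [hl, Finset.Icc_eq_empty (by omega), Finset.sum_empty, mul_zero]

theorem antitoneOn_of_partialSum (hl : ∀ i, l i = U * ∑ k ∈ Finset.Icc i (N + 1), t k)
    (hU : 0 ≤ U) (ht : ∀ k ∈ Finset.Icc 1 (N + 1), 0 ≤ t k) : AntitoneOn l (Set.Icc 1 (N + 2)) :=
  fun i hi j _ hij => by
    rw [hl, hl]
    refine mul_le_mul_of_nonneg_left (Finset.sum_le_sum_of_subset_of_nonneg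
      (Finset.Icc_subset_Icc_left hij) fun k hk _ => ht k ?_) hU
    exact Finset.Icc_subset_Icc_left hi.1 hk

theorem mul_eq_of_partialSum_last (hl : ∀ i, l i = U * ∑ k ∈ Finset.Icc i (N + 1), t k) {L : ℝ}
    (hL : L ≠ 0) (htN : t (N + 1) = 1 / L) : L * l (N + 1) = U := by
  have := sub_succ_eq_of_partialSum hl le_rfl
  rw [eq_zero_of_partialSum hl, sub_zero, htN] at this
  rw [this]
  field_simp

theorem mul_sub_succ_le_of_partialSum (hl : ∀ i, l i = U * ∑ k ∈ Finset.Icc i (N + 1), t k)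
    {L : ℝ} (hL : 0 < L) (hU : 0 ≤ U) {i : ℕ} (hi : i ≤ N + 1) (hti : t i ≤ 1 / L) :
    L * (l i - l (i + 1)) ≤ U := by
  rw [sub_succ_eq_of_partialSum hl hi]
  nlinarith [(le_div_iff₀' hL).mp hti]

end PartialSums

theorem stmt_13_general (L U : ℝ) (hL : 0 < L) (hU : 0 < U) (N : ℕ)
    (t : ℕ → ℝ) (ht : ∀ k, 1 ≤ k → k ≤ N → t k ∈ Set.Ioc 0 (1 / L))
    (htN : t (N + 1) = 1 / L)
    (l : ℕ → ℝ) (hl : ∀ i, l i = U * ∑ k ∈ Finset.Icc i (N + 1), t k)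
    (fv : ℕ → ℝ)
    (f : ℝ → ℝ)
    (hpiece1 : ∀ x, (l 1 + l 2) / 2 ≤ x →
      f x = L / 2 * (x - l 1) ^ 2 + U * (x - l 1) + fv 1)
    (hpiece2 : ∀ i, 1 ≤ i → i ≤ N → ∀ x, l (i + 1) ≤ x → x ≤ (l i + l (i + 1)) / 2 →
      f x = -(L / 2) * (x - l (i + 1)) ^ 2 + U * (x - l (i + 1)) + fv (i + 1))
    (hpiece3 : ∀ i, 1 ≤ i → i ≤ N → ∀ x, (l (i + 1) + l (i + 2)) / 2 ≤ x → x ≤ l (i + 1) →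
      f x = L / 2 * (x - l (i + 1)) ^ 2 + U * (x - l (i + 1)) + fv (i + 1))
    (hpiece4 : ∀ x, x ≤ l (N + 1) / 2 → f x = L / 2 * x ^ 2) :
    Differentiable ℝ f ∧
    (∀ a b, |deriv f a - deriv f b| ≤ L * |a - b|) ∧
    (∀ x, 0 ≤ f x) ∧ f 0 = 0 ∧
    (∀ i, 1 ≤ i → i ≤ N + 1 → f (l i) = fv i ∧ deriv f (l i) = U) := by
  have ht' : ∀ k ∈ Finset.Icc 1 (N + 1), t k ∈ Ioc 0 (1 / L) := fun k hk => by
    obtain ⟨hk1, hkN⟩ := Finset.mem_Icc.mp hk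
    rcases eq_or_lt_of_le hkN with rfl | hk
    · rw [htN]
      exact ⟨by positivity, le_rfl⟩
    · exact ht k hk1 (by omega)
  have hanti := antitoneOn_of_partialSum hl hU.le fun k hk => (ht' k hk).1.le
  have hzero := eq_zero_of_partialSum hl
  have hlast := mul_eq_of_partialSum_last hl hL.ne' htN
  have hgap : ∀ i, 1 ≤ i → i ≤ N + 1 → L * (l i - l (i + 1)) ≤ U := fun i hi1 hiN =>
    mul_sub_succ_le_of_partialSum hl hL hU.le hiN (ht' i (Finset.mem_Icc.mpr ⟨hi1, hiN⟩)).2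
  have hf := hasDerivAt_of_pieces hL.le hanti hlast hzero hpiece1 hpiece2 hpiece3 hpiece4
  have hderiv : deriv f = tentEnvelope L U l N := funext fun x => (hf x).deriv
  have hf0 : f 0 = 0 := by
    have := pos_of_mul_pos_right (hlast ▸ hU) hL.le
    simpa using hpiece4 0 (by positivity)
  refine ⟨fun x => (hf x).differentiableAt, hderiv ▸ abs_tentEnvelope_sub_le hL.le,
    fun x => hf0 ▸ isMinOn_univ_of_hasDerivAt hf
      (fun y hy => tentEnvelope_nonpos hL.le hanti hlast hzero hy.le)
      (fun y hy => tentEnvelope_nonneg hL.le hU.le hgap hzero hy.le) (mem_univ x),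
    hf0, fun i hi1 hiN => ⟨apply_node_eq hanti hpiece1 hpiece2 hi1 hiN,
      hderiv ▸ tentEnvelope_node hL.le hanti (Finset.mem_Icc.mpr ⟨hi1, hiN⟩)⟩⟩

theorem stmt_13 (L U Δ : ℝ) (hL : 0 < L) (hU : 0 < U) (N : ℕ) (hN : 1 ≤ N)
    (t : ℕ → ℝ) (ht : ∀ k, 1 ≤ k → k ≤ N → t k ∈ Set.Ioc 0 (1 / L))
    (htN : t (N + 1) = 1 / L)
    (hΔ : Δ = U ^ 2 * (∑ k ∈ Finset.Icc 1 N,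
        min (-L ^ 2 * t k ^ 3 + 4 * t k) (-L * t k ^ 2 + 4 * t k) + 2 / L) / 4)
    (l : ℕ → ℝ) (hl : ∀ i, l i = U * ∑ k ∈ Finset.Icc i (N + 1), t k)
    (fv : ℕ → ℝ)
    (hfv : ∀ i, fv i = Δ - U ^ 2 / 4 * ∑ k ∈ Finset.Icc 1 (i - 1), (-L * t k ^ 2 + 4 * t k))
    (f : ℝ → ℝ)
    (hpiece1 : ∀ x, (l 1 + l 2) / 2 ≤ x →
      f x = L / 2 * (x - l 1) ^ 2 + U * (x - l 1) + fv 1)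
    (hpiece2 : ∀ i, 1 ≤ i → i ≤ N → ∀ x, l (i + 1) ≤ x → x ≤ (l i + l (i + 1)) / 2 →
      f x = -(L / 2) * (x - l (i + 1)) ^ 2 + U * (x - l (i + 1)) + fv (i + 1))
    (hpiece3 : ∀ i, 1 ≤ i → i ≤ N → ∀ x, (l (i + 1) + l (i + 2)) / 2 ≤ x → x ≤ l (i + 1) →
      f x = L / 2 * (x - l (i + 1)) ^ 2 + U * (x - l (i + 1)) + fv (i + 1))
    (hpiece4 : ∀ x, x ≤ l (N + 1) / 2 → f x = L / 2 * x ^ 2) :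
    Differentiable ℝ f ∧
    (∀ a b, |deriv f a - deriv f b| ≤ L * |a - b|) ∧
    (∀ x, 0 ≤ f x) ∧ f 0 = 0 ∧
    (∀ i, 1 ≤ i → i ≤ N + 1 → f (l i) = fv i ∧ deriv f (l i) = U) :=
  stmt_13_general L U hL hU N t ht htN l hl fv f hpiece1 hpiece2 hpiece3 hpiece4
end

section
/- Let L > 0 and suppose the triples (x^i, g^i, f^i) ∈ ℝⁿ × ℝⁿ × ℝ, i ∈ I (I finite), satisfy for all i, j ∈ I: (1/(2L))‖g^i − g^j‖² − (L/4)‖x^i − x^j − (1/L)(g^i − g^j)‖² ≤ f^i − f^j − ⟨g^j, x^i − x^j⟩. Then for the one-dimensional case n = 1 with I = {1, 2}, there exists an L-smooth function f : ℝ → ℝ with f(x^i) = f^i and f′(x^i) = g^i for i = 1, 2. -/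
/-!
Build the derivative first. Since `|g₂ - g₁| ≤ L (x₂ - x₁)`, the largest `L`-Lipschitz function
`φ` with `φ x₁ = g₁`, `φ x₂ = g₂` is the McShane envelope `min (g₁ + L|t - x₁|) (g₂ + L|t - x₂|)`,
and the smallest is its mirror image `-min (-g₁ + L|t - x₁|) (-g₂ + L|t - x₂|)`. The two
interpolation inequalities say exactly that `f₂ - f₁` lies between the integrals of these two
envelopes over `[x₁, x₂]`, so a convex combination of them is an `L`-Lipschitz `φ` with the right
endpoint values and `∫_{x₁}^{x₂} φ = f₂ - f₁`; then `f t = f₁ + ∫_{x₁}^t φ` interpolates.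
-/

open intervalIntegral Set

lemma integral_const_add_mul_sub (p k a c d : ℝ) :
    ∫ t in c..d, (p + k * (t - a)) = p * (d - c) + k * ((d - a) ^ 2 - (c - a) ^ 2) / 2 := by
  rw [integral_add intervalIntegrable_const (Continuous.intervalIntegrable (by fun_prop) _ _)]
  simp only [integral_const, smul_eq_mul, integral_const_mul, intervalIntegrable_id,
    intervalIntegrable_const, integral_sub, integral_id]
  ring

noncomputable def upperLipExtension (L a b p q t : ℝ) : ℝ :=
  min (p + L * |t - a|) (q + L * |t - b|)

namespace upperLipExtension

variable {L a b p q : ℝ}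

lemma lipschitzWith (hL : 0 ≤ L) : LipschitzWith L.toNNReal (upperLipExtension L a b p q) := by
  have cone : ∀ c s t : ℝ, |(L * |s - c|) - (L * |t - c|)| ≤ L * |s - t| := fun c s t => by
    rw [← mul_sub, abs_mul, abs_of_nonneg hL]
    exact mul_le_mul_of_nonneg_left (by simpa using abs_abs_sub_abs_le_abs_sub (s - c) (t - c)) hL
  refine LipschitzWith.of_dist_le_mul fun s t => ?_
  rw [Real.coe_toNNReal L hL, Real.dist_eq, Real.dist_eq]
  refine (abs_min_sub_min_le_max _ _ _ _).trans (max_le ?_ ?_)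
  · simpa using cone a s t
  · simpa using cone b s t

lemma apply_left (hpq : |q - p| ≤ L * |b - a|) : upperLipExtension L a b p q a = p := by
  rw [upperLipExtension, sub_self, abs_zero, mul_zero, add_zero, abs_sub_comm]
  exact min_eq_left (by linarith [neg_abs_le (q - p)])

lemma apply_right (hpq : |q - p| ≤ L * |b - a|) : upperLipExtension L a b p q b = q := by
  rw [upperLipExtension, sub_self, abs_zero, mul_zero, add_zero]
  exact min_eq_right (by linarith [le_abs_self (q - p)])

lemma integral (hL : 0 < L) (hpq : |q - p| ≤ L * (b - a)) :
    ∫ t in a..b, upperLipExtension L a b p q t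
      = (p + q) * (b - a) / 2 + L * (b - a) ^ 2 / 4 - (q - p) ^ 2 / (4 * L) := by
  -- the two cones meet at `c`
  set c := (a + b) / 2 + (q - p) / (2 * L) with hc
  have hc2 : 2 * L * c = L * (a + b) + (q - p) := by rw [hc]; field_simp
  obtain ⟨hpq₁, hpq₂⟩ := abs_le.mp hpq
  have hac : a ≤ c := le_of_mul_le_mul_left (by linarith) (by positivity : 0 < 2 * L)
  have hcb : c ≤ b := le_of_mul_le_mul_left (by linarith) (by positivity : 0 < 2 * L)
  have hcont : Continuous (upperLipExtension L a b p q) := (lipschitzWith hL.le).continuous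
  have hIcc : ∀ t ∈ Icc a b, upperLipExtension L a b p q t
      = min (p + L * (t - a)) (q + (-L) * (t - b)) := fun t ht => by
    rw [upperLipExtension, abs_of_nonneg (sub_nonneg.2 ht.1), abs_of_nonpos (sub_nonpos.2 ht.2)]
    ring_nf
  have hleft : EqOn (upperLipExtension L a b p q) (fun t => p + L * (t - a)) (uIcc a c) := by
    intro t ht
    rw [uIcc_of_le hac] at ht
    rw [hIcc t ⟨ht.1, ht.2.trans hcb⟩]
    refine min_eq_left ?_
    nlinarith [ht.2]
  have hright : EqOn (upperLipExtension L a b p q) (fun t => q + (-L) * (t - b)) (uIcc c b) := by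
    intro t ht
    rw [uIcc_of_le hcb] at ht
    rw [hIcc t ⟨hac.trans ht.1, ht.2⟩]
    refine min_eq_right ?_
    nlinarith [ht.1]
  rw [← integral_add_adjacent_intervals (hcont.intervalIntegrable a c)
    (hcont.intervalIntegrable c b), integral_congr hleft, integral_congr hright,
    integral_const_add_mul_sub, integral_const_add_mul_sub, hc]
  field_simp
  ring

end upperLipExtension

lemma LipschitzWith.combo {α : Type*} [PseudoMetricSpace α] {K : NNReal} {φ ψ : α → ℝ}
    (hφ : LipschitzWith K φ) (hψ : LipschitzWith K ψ) {s r : ℝ} (hs : 0 ≤ s) (hr : 0 ≤ r)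
    (hsr : s + r = 1) : LipschitzWith K fun x => s * φ x + r * ψ x := by
  refine LipschitzWith.of_dist_le_mul fun x y => ?_
  have hφxy := hφ.dist_le_mul x y
  have hψxy := hψ.dist_le_mul x y
  rw [Real.dist_eq] at hφxy hψxy ⊢
  calc |s * φ x + r * ψ x - (s * φ y + r * ψ y)|
      = |s * (φ x - φ y) + r * (ψ x - ψ y)| := by ring_nf
    _ ≤ s * |φ x - φ y| + r * |ψ x - ψ y| := by
      grw [abs_add_le, abs_mul, abs_mul, abs_of_nonneg hs, abs_of_nonneg hr]
    _ ≤ s * (K * dist x y) + r * (K * dist x y) := by gcongr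
    _ = K * dist x y := by linear_combination (K * dist x y) * hsr

lemma exists_lipschitzWith_integral_eq {L a b p q I : ℝ} (hL : 0 < L) (hab : a ≤ b)
    (hI₁ : (p + q) * (b - a) / 2 - L * (b - a) ^ 2 / 4 + (q - p) ^ 2 / (4 * L) ≤ I)
    (hI₂ : I ≤ (p + q) * (b - a) / 2 + L * (b - a) ^ 2 / 4 - (q - p) ^ 2 / (4 * L)) :
    ∃ φ : ℝ → ℝ, LipschitzWith L.toNNReal φ ∧ φ a = p ∧ φ b = q ∧ ∫ t in a..b, φ t = I := by
  have hpq : |q - p| ≤ L * (b - a) := by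
    refine abs_le_of_sq_le_sq ?_ (by positivity)
    have hmM := hI₁.trans hI₂
    field_simp at hmM
    nlinarith
  have hneg : |-q - -p| ≤ L * (b - a) := by rwa [← abs_neg, neg_sub, sub_neg_eq_add, neg_add_eq_sub]
  have hba : |b - a| = b - a := abs_of_nonneg (sub_nonneg.2 hab)
  have hu := upperLipExtension.lipschitzWith (a := a) (b := b) (p := p) (q := q) hL.le
  have hv := (upperLipExtension.lipschitzWith (a := a) (b := b) (p := -p) (q := -q) hL.le).neg
  obtain ⟨s, r, hs, hr, hsr, hsrI⟩ : I ∈ segment ℝ _ _ := by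
    rw [segment_eq_Icc (hI₁.trans hI₂)]; exact ⟨hI₁, hI₂⟩
  refine ⟨fun t => s * (-upperLipExtension L a b (-p) (-q)) t + r * upperLipExtension L a b p q t,
    hv.combo hu hs hr hsr, ?_, ?_, ?_⟩
  · simp only [Pi.neg_apply, upperLipExtension.apply_left (hba ▸ hpq),
      upperLipExtension.apply_left (hba ▸ hneg)]
    linear_combination p * hsr
  · simp only [Pi.neg_apply, upperLipExtension.apply_right (hba ▸ hpq),
      upperLipExtension.apply_right (hba ▸ hneg)]
    linear_combination q * hsr
  · rw [integral_add ((hv.continuous.intervalIntegrable _ _).const_mul _)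
      ((hu.continuous.intervalIntegrable _ _).const_mul _), integral_const_mul, integral_const_mul,
      Pi.neg_def, integral_neg, upperLipExtension.integral hL hpq,
      upperLipExtension.integral hL hneg, ← hsrI, smul_eq_mul, smul_eq_mul]
    ring

lemma interpolation_ineq_iff {L : ℝ} (hL : L ≠ 0) (xi xj gi gj fi fj : ℝ) :
    1 / (2 * L) * (gi - gj) ^ 2 - L / 4 * (xi - xj - 1 / L * (gi - gj)) ^ 2 ≤
        fi - fj - gj * (xi - xj)
      ↔ (gj + gi) * (xi - xj) / 2 - L * (xi - xj) ^ 2 / 4 + (gi - gj) ^ 2 / (4 * L) ≤ fi - fj := by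
  have hlhs : 1 / (2 * L) * (gi - gj) ^ 2 - L / 4 * (xi - xj - 1 / L * (gi - gj)) ^ 2
        + gj * (xi - xj)
      = (gj + gi) * (xi - xj) / 2 - L * (xi - xj) ^ 2 / 4 + (gi - gj) ^ 2 / (4 * L) := by
    field_simp
    ring
  constructor <;> intro h <;> linarith

theorem exists_smooth_interpolant_of_le {L x₁ x₂ g₁ g₂ f₁ f₂ : ℝ} (hL : 0 < L) (hx : x₁ ≤ x₂)
    (h₂₁ : 1 / (2 * L) * (g₂ - g₁) ^ 2 - L / 4 * (x₂ - x₁ - 1 / L * (g₂ - g₁)) ^ 2 ≤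
      f₂ - f₁ - g₁ * (x₂ - x₁))
    (h₁₂ : 1 / (2 * L) * (g₁ - g₂) ^ 2 - L / 4 * (x₁ - x₂ - 1 / L * (g₁ - g₂)) ^ 2 ≤
      f₁ - f₂ - g₂ * (x₁ - x₂)) :
    ∃ f : ℝ → ℝ, Differentiable ℝ f ∧ LipschitzWith L.toNNReal (deriv f) ∧
      f x₁ = f₁ ∧ deriv f x₁ = g₁ ∧ f x₂ = f₂ ∧ deriv f x₂ = g₂ := by
  rw [interpolation_ineq_iff hL.ne'] at h₂₁ h₁₂
  obtain ⟨φ, hφ, hφ₁, hφ₂, hφI⟩ := exists_lipschitzWith_integral_eq (I := f₂ - f₁) hL hx h₂₁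
    (by linear_combination h₁₂)
  have hf : ∀ t, HasDerivAt (fun t => f₁ + ∫ s in x₁..t, φ s) (φ t) t := fun t =>
    (hφ.continuous.integral_hasStrictDerivAt x₁ t).hasDerivAt.const_add f₁
  have hderiv : deriv (fun t => f₁ + ∫ s in x₁..t, φ s) = φ := funext fun t => (hf t).deriv
  refine ⟨_, fun t => (hf t).differentiableAt, ?_⟩
  rw [hderiv]
  exact ⟨hφ, by simp, hφ₁, by simp [hφI], hφ₂⟩

theorem stmt_14 (L : ℝ) (hL : 0 < L) (x g fv : Fin 2 → ℝ)
    (hinterp : ∀ i j, 1 / (2 * L) * (g i - g j) ^ 2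
        - L / 4 * (x i - x j - 1 / L * (g i - g j)) ^ 2 ≤
      fv i - fv j - g j * (x i - x j)) :
    ∃ f : ℝ → ℝ, Differentiable ℝ f ∧
      (∀ a b, |deriv f a - deriv f b| ≤ L * |a - b|) ∧
      ∀ i, f (x i) = fv i ∧ deriv f (x i) = g i := by
  obtain ⟨i, j, hij, hx⟩ : ∃ i j : Fin 2, i ≠ j ∧ x i ≤ x j := by
    rcases le_total (x 0) (x 1) with h | h
    exacts [⟨0, 1, by decide, h⟩, ⟨1, 0, by decide, h⟩]
  obtain ⟨f, hf, hlip, hfi, hdi, hfj, hdj⟩ :=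
    exists_smooth_interpolant_of_le hL hx (hinterp j i) (hinterp i j)
  refine ⟨f, hf, fun a b => ?_, fun k => ?_⟩
  · simpa [Real.dist_eq, hL.le] using hlip.dist_le_mul a b
  · obtain rfl | rfl : k = i ∨ k = j := by omega
    exacts [⟨hfi, hdi⟩, ⟨hfj, hdj⟩]
end

section
/- Let L > 0, N ≥ 1, t_k ∈ (0, √3/L), B > 0, and define α_k = (B/2)max(2, t_kL+1), σ_1 = (B/4)min(−Lt_1²+3t_1, −L²t_1³+3t_1), σ_k = (B/4)min(−Lt_k²+3t_k+t_{k−1}, −L²t_k³+3t_k+t_{k−1}) for 2 ≤ k ≤ N, and σ_{N+1} = (B/(4L))(2+Lt_N). Then all multipliers α_k, α_k − B, σ_k are nonnegative, and σ_k + (2α_k − B)(Lt_k²/4) − Bt_k/2 = (B/4)(t_k + t_{k−1}) for 2 ≤ k ≤ N. Moreover Σ_{k=1}^{N+1} σ_k = B·(Σ_{k=1}^N min(−L²t_k³+4t_k, −Lt_k²+4t_k) + 2/L)/4. -/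
/-!
Nonnegativity of the `σ_k` reduces to `x (3 - L x) ≥ 0` and `x (3 - (L x)²) ≥ 0`, both
consequences of `L x < √3`. For the identity, `2 α_k - B = B max(1, L t_k)`, and `L t² max(1, L t)`
is exactly what the minimum in `σ_k` subtracts from `3 t_k + t_{k-1}`. The sum identity is a
telescoping of the `t_{k-1}` carried by `σ_k` against the `t_k` inside the target minima.
-/

open Finset

lemma sum_Icc_add_eq_sum_Icc_add_of_eq_add_pred {M : Type*} [AddCommMonoid M]
    (σ f g : ℕ → M) {N : ℕ} (hN : 1 ≤ N) (h1 : σ 1 = f 1)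
    (hk : ∀ k, 2 ≤ k → k ≤ N → σ k = f k + g (k - 1)) :
    ∑ k ∈ Icc 1 N, σ k + g N = ∑ k ∈ Icc 1 N, (f k + g k) := by
  induction N, hN using Nat.le_induction with
  | base => simp [h1]
  | succ n hn ih =>
    rw [sum_Icc_succ_top (by omega), sum_Icc_succ_top (by omega),
      ← ih fun k hk₂ hkn ↦ hk k hk₂ (by omega), hk (n + 1) (by omega) le_rfl,
      Nat.add_sub_cancel]
    abel

lemma min_three_mul_sub_nonneg_of_mul_le_sqrt_three {L x : ℝ} (hL : 0 ≤ L) (hx : 0 ≤ x)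
    (hLx : L * x ≤ √3) : 0 ≤ min (-L * x ^ 2 + 3 * x) (-L ^ 2 * x ^ 3 + 3 * x) := by
  have hLx0 : 0 ≤ L * x := mul_nonneg hL hx
  have hsq : (L * x) ^ 2 ≤ 3 := (Real.le_sqrt hLx0 (by norm_num)).mp hLx
  have hle3 : L * x ≤ 3 := by nlinarith
  refine le_min ?_ ?_
  · nlinarith [mul_nonneg hx (sub_nonneg.mpr hle3)]
  · nlinarith [mul_nonneg hx (sub_nonneg.mpr hsq)]

lemma min_add_max_sub_one_mul_eq {L : ℝ} (hL : 0 ≤ L) (x a : ℝ) :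
    min (-L * x ^ 2 + 3 * x + a) (-L ^ 2 * x ^ 3 + 3 * x + a) +
      (max 2 (x * L + 1) - 1) * (L * x ^ 2) = 3 * x + a := by
  have hLx2 : 0 ≤ L * x ^ 2 := by positivity
  rcases le_total (L * x) 1 with h | h
  · rw [max_eq_left (by linarith), min_eq_left (by nlinarith)]
    ring
  · rw [max_eq_right (by linarith), min_eq_right (by nlinarith)]
    ring

lemma min_four_mul_eq_min_three_mul_add (L x : ℝ) :
    min (-L ^ 2 * x ^ 3 + 4 * x) (-L * x ^ 2 + 4 * x) =
      min (-L * x ^ 2 + 3 * x) (-L ^ 2 * x ^ 3 + 3 * x) + x := by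
  rw [← min_add_add_right, min_comm]
  ring_nf

theorem stmt_16 (L B : ℝ) (hL : 0 < L) (hB : 0 < B) (N : ℕ) (hN : 1 ≤ N)
    (t : ℕ → ℝ) (ht : ∀ k, 1 ≤ k → k ≤ N → t k ∈ Set.Ioo 0 (Real.sqrt 3 / L))
    (α σ : ℕ → ℝ)
    (hα : ∀ k, 1 ≤ k → k ≤ N → α k = B / 2 * max 2 (t k * L + 1))
    (hσ1 : σ 1 = B / 4 * min (-L * t 1 ^ 2 + 3 * t 1) (-L ^ 2 * t 1 ^ 3 + 3 * t 1))
    (hσk : ∀ k, 2 ≤ k → k ≤ N →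
      σ k = B / 4 * min (-L * t k ^ 2 + 3 * t k + t (k - 1))
        (-L ^ 2 * t k ^ 3 + 3 * t k + t (k - 1)))
    (hσN1 : σ (N + 1) = B / (4 * L) * (2 + L * t N)) :
    (∀ k, 1 ≤ k → k ≤ N → 0 ≤ α k ∧ 0 ≤ α k - B) ∧
    (∀ k, 1 ≤ k → k ≤ N + 1 → 0 ≤ σ k) ∧
    (∀ k, 2 ≤ k → k ≤ N →
      σ k + (2 * α k - B) * (L * t k ^ 2 / 4) - B * t k / 2 = B / 4 * (t k + t (k - 1))) ∧
    ∑ k ∈ Finset.Icc 1 (N + 1), σ k =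
      B * (∑ k ∈ Finset.Icc 1 N,
        min (-L ^ 2 * t k ^ 3 + 4 * t k) (-L * t k ^ 2 + 4 * t k) + 2 / L) / 4 := by
  have ht_pos k (h₁ : 1 ≤ k) (h₂ : k ≤ N) : 0 < t k := (ht k h₁ h₂).1
  have hmin k (h₁ : 1 ≤ k) (h₂ : k ≤ N) :
      0 ≤ min (-L * t k ^ 2 + 3 * t k) (-L ^ 2 * t k ^ 3 + 3 * t k) := by
    have hLt : L * t k < √3 := (lt_div_iff₀' hL).mp (ht k h₁ h₂).2
    exact min_three_mul_sub_nonneg_of_mul_le_sqrt_three hL.le (ht_pos k h₁ h₂).le hLt.le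
  have hσ_shift k (h₂ : 2 ≤ k) (hkN : k ≤ N) : σ k =
      B / 4 * min (-L * t k ^ 2 + 3 * t k) (-L ^ 2 * t k ^ 3 + 3 * t k) + B / 4 * t (k - 1) := by
    rw [hσk k h₂ hkN, min_add_add_right, mul_add]
  refine ⟨fun k h₁ h₂ ↦ ?_, fun k h₁ h₂ ↦ ?_, fun k h₂ hkN ↦ ?_, ?_⟩
  · have h2 : (2 : ℝ) ≤ max 2 (t k * L + 1) := le_max_left _ _
    rw [hα k h₁ h₂]
    constructor <;> nlinarith
  · rcases Nat.lt_or_ge N k with hNk | hkN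
    · obtain rfl : k = N + 1 := by omega
      rw [hσN1]
      have := ht_pos N hN le_rfl
      positivity
    · rcases Nat.lt_or_ge k 2 with hk1 | hk2
      · obtain rfl : k = 1 := by omega
        rw [hσ1]
        exact mul_nonneg (by positivity) (hmin 1 le_rfl hN)
      · rw [hσ_shift k hk2 hkN]
        have := ht_pos (k - 1) (by omega) (by omega)
        have := hmin k (by omega) hkN
        positivity
  · rw [hσk k h₂ hkN, hα k (by omega) hkN]
    linear_combination (B / 4) * min_add_max_sub_one_mul_eq hL.le (t k) (t (k - 1))
  · have htelescope := sum_Icc_add_eq_sum_Icc_add_of_eq_add_pred σ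
      (fun k ↦ B / 4 * min (-L * t k ^ 2 + 3 * t k) (-L ^ 2 * t k ^ 3 + 3 * t k))
      (fun k ↦ B / 4 * t k) hN hσ1 hσ_shift
    simp only [← mul_add, ← mul_sum, ← min_four_mul_eq_min_three_mul_add] at htelescope
    have hlast : B / (4 * L) * (2 + L * t N) = B / 4 * (2 / L) + B / 4 * t N := by
      field_simp
    rw [sum_Icc_succ_top (by omega), hσN1, hlast]
    linear_combination htelescope
end
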